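/- arXiv:1007.0515 — 14 statements merged into one kernel-verified Lean document; each statement's English description precedes it below -/
import Mathlib

section
/- Let cap be a credit network on a finite type V, let σ be a state, and suppose σ' is obtained from σ by routing a unit payment from s to t (with s ≠ t) along some feasible path. Then score σ' s = score σ s + 1, score σ' t = score σ t − 1 (and score σ t ≥ 1), and score σ' v = score σ v for every vertex v distinct from s and t. In particular, the score vector of the state resulting from routing a unit payment from s to t does not depend on the choice of feasible path. -/
open Finset

/-- A state of a credit network with capacities `cap`: `σ u v + σ v u = cap u v`. -/
def IsState {V : Type*} (cap σ : V → V → ℕ) : Prop :=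
  ∀ u v : V, σ u v + σ v u = cap u v

/-- The score vector of a state: total capacity on outgoing edges of each vertex. -/
def score {V : Type*} [Fintype V] (σ : V → V → ℕ) (v : V) : ℕ := ∑ u, σ v u

/-- `u : Fin (k+1) → V` is a feasible path for a unit payment from `s` to `t` in state `σ`. -/
def FeasiblePath {V : Type*} (σ : V → V → ℕ) (s t : V) (k : ℕ) (u : Fin (k + 1) → V) : Prop :=
  1 ≤ k ∧ Function.Injective u ∧ u 0 = s ∧ u (Fin.last k) = t ∧
    ∀ i : Fin k, 1 ≤ σ (u i.succ) (u i.castSucc)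

/-- The unit transaction `(s,t)` is feasible in `σ`. -/
def Feasible {V : Type*} (σ : V → V → ℕ) (s t : V) : Prop :=
  ∃ (k : ℕ) (u : Fin (k + 1) → V), FeasiblePath σ s t k u

/-- `σ'` is the result of routing a unit payment along the path `u` in `σ`. -/
def RouteResult {V : Type*} (σ σ' : V → V → ℕ) (k : ℕ) (u : Fin (k + 1) → V) : Prop :=
  (∀ i : Fin k,
      σ' (u i.succ) (u i.castSucc) = σ (u i.succ) (u i.castSucc) - 1 ∧
      σ' (u i.castSucc) (u i.succ) = σ (u i.castSucc) (u i.succ) + 1) ∧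
  ∀ x y : V,
    (∀ i : Fin k, ¬(x = u i.succ ∧ y = u i.castSucc) ∧ ¬(x = u i.castSucc ∧ y = u i.succ)) →
    σ' x y = σ x y

/-- `σ'` is obtained from `σ` by routing a unit payment from `s` to `t` along some feasible path. -/
def RoutesUnit {V : Type*} (σ σ' : V → V → ℕ) (s t : V) : Prop :=
  ∃ (k : ℕ) (u : Fin (k + 1) → V), FeasiblePath σ s t k u ∧ RouteResult σ σ' k u

/-!
Routing along `u` raises `σ` by one on every forward edge `(u i, u (i+1))` and lowers it by one
on the reverse edge; as `u` is injective, each ordered pair is touched at most once. Summing the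
row of a vertex `v`, the change of `score v` is `∑ i, ([v = u i] - [v = u (i+1)])`, which
telescopes to `[v = s] - [v = t]` whatever the path.
-/

theorem Fin.sum_univ_castSucc_sub_succ {M : Type*} [AddCommGroup M] {n : ℕ}
    (f : Fin (n + 1) → M) :
    ∑ i : Fin n, (f i.castSucc - f i.succ) = f 0 - f (Fin.last n) := by
  induction n with
  | zero => simp
  | succ n ih =>
    rw [Fin.sum_univ_castSucc]
    simp only [Fin.succ_castSucc]
    rw [ih (fun i => f i.castSucc), Fin.castSucc_zero, Fin.succ_last]
    abel

section Routing

variable {V : Type*} {σ σ' : V → V → ℕ} {s t : V} {k : ℕ} {u : Fin (k + 1) → V}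

theorem FeasiblePath.ne (hp : FeasiblePath σ s t k u) : s ≠ t := by
  obtain ⟨hk, hinj, rfl, rfl, -⟩ := hp
  intro h
  have := congrArg Fin.val (hinj h)
  simp only [Fin.val_zero, Fin.val_last] at this
  omega

variable [DecidableEq V]

theorem RouteResult.cast_eq_add_sum (hinj : Function.Injective u)
    (hfeas : ∀ i : Fin k, 1 ≤ σ (u i.succ) (u i.castSucc)) (hr : RouteResult σ σ' k u)
    (x y : V) :
    (σ' x y : ℤ) = σ x y + ∑ i : Fin k,
      ((if x = u i.castSucc ∧ y = u i.succ then 1 else 0) -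
        (if x = u i.succ ∧ y = u i.castSucc then 1 else 0)) := by
  have not_reversed (i j : Fin k) : ¬(i.castSucc = j.succ ∧ i.succ = j.castSucc) := by
    simp only [Fin.ext_iff, Fin.val_castSucc, Fin.val_succ]
    omega
  by_cases hfwd : ∃ i : Fin k, x = u i.castSucc ∧ y = u i.succ
  · obtain ⟨i, rfl, rfl⟩ := hfwd
    simp [(hr.1 i).2, hinj.eq_iff, not_reversed]
  by_cases hbwd : ∃ i : Fin k, x = u i.succ ∧ y = u i.castSucc
  · obtain ⟨i, rfl, rfl⟩ := hbwd
    have not_forward (j : Fin k) : ¬(i.succ = j.castSucc ∧ i.castSucc = j.succ) :=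
      fun h => not_reversed j i ⟨h.1.symm, h.2.symm⟩
    simp [(hr.1 i).1, Nat.cast_sub (hfeas i), hinj.eq_iff, not_forward, sub_eq_add_neg]
  push Not at hfwd hbwd
  rw [hr.2 x y fun i => ⟨fun h => hbwd i h.1 h.2, fun h => hfwd i h.1 h.2⟩]
  refine (add_eq_left.mpr (Finset.sum_eq_zero fun i _ => ?_)).symm
  rw [if_neg fun h => hfwd i h.1 h.2, if_neg fun h => hbwd i h.1 h.2, sub_self]

theorem RouteResult.score_sub_score [Fintype V] (hinj : Function.Injective u)
    (hfeas : ∀ i : Fin k, 1 ≤ σ (u i.succ) (u i.castSucc)) (hr : RouteResult σ σ' k u)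
    (v : V) :
    (score σ' v : ℤ) - score σ v =
      (if v = u 0 then 1 else 0) - (if v = u (Fin.last k) then 1 else 0) := by
  rw [← Fin.sum_univ_castSucc_sub_succ (fun j => if v = u j then (1 : ℤ) else 0)]
  simp only [score, Nat.cast_sum, ← Finset.sum_sub_distrib, hr.cast_eq_add_sum hinj hfeas,
    add_sub_cancel_left]
  rw [Finset.sum_comm]
  simp [ite_and, Finset.sum_sub_distrib]

theorem RoutesUnit.score_add_ite_eq [Fintype V] (h : RoutesUnit σ σ' s t) (v : V) :
    score σ' v + (if v = t then 1 else 0) = score σ v + (if v = s then 1 else 0) := by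
  obtain ⟨k, u, ⟨-, hinj, rfl, rfl, hfeas⟩, hr⟩ := h
  have := hr.score_sub_score hinj hfeas v
  split_ifs at this ⊢ <;> omega

end Routing

theorem stmt0_general {V : Type*} [Fintype V]
    (σ σ' : V → V → ℕ)
    (s t : V) (hroute : RoutesUnit σ σ' s t) :
    score σ' s = score σ s + 1 ∧
    1 ≤ score σ t ∧
    score σ' t = score σ t - 1 ∧
    (∀ v : V, v ≠ s → v ≠ t → score σ' v = score σ v) ∧
    ∀ σ'' : V → V → ℕ, RoutesUnit σ σ'' s t → score σ'' = score σ' := by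
  classical
  have hst : s ≠ t := by
    obtain ⟨k, u, hp, -⟩ := hroute
    exact hp.ne
  have key := hroute.score_add_ite_eq
  have hs := key s
  have ht := key t
  simp only [if_pos, if_neg hst, if_neg hst.symm] at hs ht
  refine ⟨by omega, by omega, by omega, fun v hvs hvt => ?_, fun σ'' h'' => ?_⟩
  · simpa [hvs, hvt] using key v
  · funext v
    have := h''.score_add_ite_eq v
    have := key v
    omega

theorem stmt0 {V : Type*} [Fintype V]
    (cap : V → V → ℕ) (hcap_symm : ∀ u v : V, cap u v = cap v u)
    (hcap_diag : ∀ v : V, cap v v = 0)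
    (σ σ' : V → V → ℕ) (hσ : IsState cap σ)
    (s t : V) (hst : s ≠ t) (hroute : RoutesUnit σ σ' s t) :
    score σ' s = score σ s + 1 ∧
    1 ≤ score σ t ∧
    score σ' t = score σ t - 1 ∧
    (∀ v : V, v ≠ s → v ≠ t → score σ' v = score σ v) ∧
    ∀ σ'' : V → V → ℕ, RoutesUnit σ σ'' s t → score σ'' = score σ' :=
  stmt0_general σ σ' s t hroute
end

section
/- Let cap be a credit network on a finite type V and let σ and σ' be two states of the network. Then σ' is cycle-reachable from σ if and only if score σ = score σ'. -/
open Finset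

/-- `σ'` is obtained from `σ` by routing a unit payment around one feasible cycle
(a cyclically ordered list of at least 3 pairwise distinct vertices). -/
def CycleStep {V : Type*} (σ σ' : V → V → ℕ) : Prop :=
  ∃ (k : ℕ) (u : Fin (k + 3) → V),
    Function.Injective u ∧
    (∀ i : Fin (k + 3), 1 ≤ σ (u (i + 1)) (u i)) ∧
    (∀ i : Fin (k + 3),
        σ' (u (i + 1)) (u i) = σ (u (i + 1)) (u i) - 1 ∧
        σ' (u i) (u (i + 1)) = σ (u i) (u (i + 1)) + 1) ∧
    ∀ x y : V,
      (∀ i : Fin (k + 3), ¬(x = u (i + 1) ∧ y = u i) ∧ ¬(x = u i ∧ y = u (i + 1))) →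
      σ' x y = σ x y

/-- `σ'` is cycle-reachable from `σ`: obtainable by routing units around finitely many
feasible cycles. -/
def CycleReachable {V : Type*} (σ σ' : V → V → ℕ) : Prop :=
  Relation.ReflTransGen CycleStep σ σ'

/-!
Routing around a cycle moves one unit out of and one unit into each vertex on it, so scores are
invariant. Conversely, if `score σ = score σ'`, call `(x, y)` deficient when `σ x y < σ' x y`.
Equal capacities make deficiency asymmetric, and equal scores force every vertex entered by a
deficient edge to leave by one; following such edges in a finite network closes a cycle of length
at least 3 which is feasible in `σ` (its reverse edges carry a surplus). Routing around it strictly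
lowers the total deficit `∑ x y, (σ' x y - σ x y)`, so induction on the deficit reaches `σ'`.
-/

theorem Fin.add_one_add_one_ne_self {k : ℕ} (i : Fin (k + 3)) : i + 1 + 1 ≠ i := by
  rw [add_assoc, Ne, add_eq_left, Fin.ext_iff]
  simp [Fin.val_add, Nat.mod_eq_of_lt (show 2 < k + 3 by omega)]

theorem Finset.sum_eq_sum_of_transfer_one {ι : Type*} [DecidableEq ι] {s : Finset ι}
    {f g : ι → ℕ} {a b : ι} (ha : a ∈ s) (hb : b ∈ s) (hab : a ≠ b) (hfa : f a = g a + 1)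
    (hgb : g b = f b + 1) (h : ∀ x, x ≠ a → x ≠ b → f x = g x) :
    ∑ x ∈ s, f x = ∑ x ∈ s, g x := by
  have hpair : {a, b} ⊆ s := insert_subset ha (singleton_subset_iff.2 hb)
  have hrest : ∑ x ∈ s \ {a, b}, f x = ∑ x ∈ s \ {a, b}, g x :=
    sum_congr rfl fun x hx => by
      simp only [mem_sdiff, mem_insert, mem_singleton, not_or] at hx
      exact h x hx.2.1 hx.2.2
  rw [← sum_sdiff hpair, ← sum_sdiff hpair (f := g), sum_pair hab, sum_pair hab, hrest]
  omega

theorem Function.exists_mem_periodicPts {α : Type*} [Finite α] [Nonempty α] (f : α → α) :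
    ∃ x, x ∈ periodicPts f := by
  obtain ⟨m, n, hmn, heq⟩ :=
    Finite.exists_ne_map_eq_of_infinite fun n => f^[n] (Classical.arbitrary α)
  wlog hlt : m < n generalizing m n
  · exact this n m hmn.symm heq.symm (by omega)
  refine ⟨f^[m] (Classical.arbitrary α), n - m, by omega, ?_⟩
  rw [IsPeriodicPt, IsFixedPt, ← iterate_add_apply, Nat.sub_add_cancel hlt.le]
  exact heq.symm

theorem exists_injective_cycle {α : Type*} [Finite α] (r : α → α → Prop)
    (hasymm : ∀ a b, r a b → ¬r b a) (hsucc : ∀ a b, r a b → ∃ c, r b c) {a b : α} (hab : r a b) :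
    ∃ (k : ℕ) (u : Fin (k + 3) → α), Function.Injective u ∧ ∀ i, r (u i) (u (i + 1)) := by
  let S := {b // ∃ a, r a b}
  have : Nonempty S := ⟨⟨b, a, hab⟩⟩
  choose g hg using fun y : S => hsucc _ _ y.2.choose_spec
  let f : S → S := fun y => ⟨g y, y, hg y⟩
  have hf : ∀ y : S, r y (f y) := hg
  obtain ⟨x, hx⟩ := Function.exists_mem_periodicPts f
  have hn : 3 ≤ Function.minimalPeriod f x := by
    have hpos := Function.minimalPeriod_pos_of_mem_periodicPts hx
    have hne1 : Function.minimalPeriod f x ≠ 1 := fun h1 => by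
      have hfix : f x = x := Function.minimalPeriod_eq_one_iff_isFixedPt.mp h1
      have hloop := hf x
      rw [hfix] at hloop
      exact hasymm _ _ hloop hloop
    have hne2 : Function.minimalPeriod f x ≠ 2 := fun h2 => by
      have hback : f (f x) = x := by
        simpa [h2] using Function.iterate_minimalPeriod (f := f) (x := x)
      have hreturn := hf (f x)
      rw [hback] at hreturn
      exact hasymm _ _ (hf x) hreturn
    omega
  obtain ⟨k, hk⟩ : ∃ k, Function.minimalPeriod f x = k + 3 := ⟨_, (Nat.sub_add_cancel hn).symm⟩
  refine ⟨k, fun i => (f^[i] x : α), fun i j hij => ?_, fun i => ?_⟩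
  · have := Function.iterate_injOn_Iio_minimalPeriod (f := f) (x := x)
      (by simp [hk]) (by simp [hk]) (Subtype.ext hij)
    exact Fin.ext this
  · have hsucc_val : f^[(i + 1 : Fin (k + 3)).val] x = f (f^[i] x) := by
      calc f^[(i + 1 : Fin (k + 3)).val] x = f^[(i.val + 1) % (k + 3)] x := by simp [Fin.val_add]
        _ = f^[i.val + 1] x := by
          rw [← Function.iterate_mod_minimalPeriod_eq (n := i.val + 1), hk]
        _ = f (f^[i] x) := Function.iterate_succ_apply' f i x
    simp only [hsucc_val]
    exact hf _

theorem CycleStep.score_eq {V : Type*} [Fintype V] {σ τ : V → V → ℕ} (h : CycleStep σ τ) :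
    score σ = score τ := by
  classical
  obtain ⟨k, u, hu, hfeas, hroute, hrest⟩ := h
  funext v
  by_cases hv : ∃ j, u j = v
  · obtain ⟨j, rfl⟩ := hv
    have hprev : (j - 1) + 1 = j := sub_add_cancel j 1
    have hout : σ (u j) (u (j - 1)) = τ (u j) (u (j - 1)) + 1 := by
      have hdec := (hroute (j - 1)).1
      have hpos := hfeas (j - 1)
      rw [hprev] at hdec hpos
      omega
    refine sum_eq_sum_of_transfer_one (mem_univ _) (mem_univ _) (fun h => ?_) hout (hroute j).2
      fun x hxa hxb => ?_
    · exact Fin.add_one_add_one_ne_self (j - 1) (by rw [hprev, hu h])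
    · refine (hrest _ _ fun i => ⟨?_, ?_⟩).symm
      · rintro ⟨hj, rfl⟩
        exact hxa (by rw [hu hj, add_sub_cancel_right])
      · rintro ⟨hj, rfl⟩
        exact hxb (by rw [hu hj])
  · simp only [not_exists] at hv
    exact sum_congr rfl fun x _ =>
      (hrest _ x fun i => ⟨fun h => hv _ h.1.symm, fun h => hv _ h.1.symm⟩).symm

theorem CycleReachable.score_eq {V : Type*} [Fintype V] {σ τ : V → V → ℕ}
    (h : CycleReachable σ τ) : score σ = score τ := by
  induction h with
  | refl => rfl
  | tail _ hstep ih => exact ih.trans hstep.score_eq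

section Routing

variable {V : Type*} {k : ℕ}

open Classical in
noncomputable def routeCycle (σ : V → V → ℕ) (u : Fin (k + 3) → V) : V → V → ℕ := fun x y =>
  if ∃ i, x = u (i + 1) ∧ y = u i then σ x y - 1
  else if ∃ i, x = u i ∧ y = u (i + 1) then σ x y + 1
  else σ x y

variable {σ : V → V → ℕ} {u : Fin (k + 3) → V}

theorem routeCycle_apply_succ_self (i : Fin (k + 3)) :
    routeCycle σ u (u (i + 1)) (u i) = σ (u (i + 1)) (u i) - 1 :=
  if_pos ⟨i, rfl, rfl⟩

theorem routeCycle_apply_self_succ (hu : Function.Injective u) (i : Fin (k + 3)) :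
    routeCycle σ u (u i) (u (i + 1)) = σ (u i) (u (i + 1)) + 1 := by
  have hback : ¬∃ j, u i = u (j + 1) ∧ u (i + 1) = u j := by
    rintro ⟨j, hi, hj⟩
    exact Fin.add_one_add_one_ne_self i (by rw [hu hj, hu hi])
  rw [routeCycle, if_neg hback, if_pos ⟨i, rfl, rfl⟩]

theorem routeCycle_apply_of_not_edge {x y : V}
    (h : ∀ i, ¬(x = u (i + 1) ∧ y = u i) ∧ ¬(x = u i ∧ y = u (i + 1))) :
    routeCycle σ u x y = σ x y := by
  rw [routeCycle, if_neg fun ⟨i, hi⟩ => (h i).1 hi, if_neg fun ⟨i, hi⟩ => (h i).2 hi]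

theorem cycleStep_routeCycle (hu : Function.Injective u)
    (hfeas : ∀ i, 1 ≤ σ (u (i + 1)) (u i)) : CycleStep σ (routeCycle σ u) :=
  ⟨k, u, hu, hfeas, fun i => ⟨routeCycle_apply_succ_self i, routeCycle_apply_self_succ hu i⟩,
    fun _ _ => routeCycle_apply_of_not_edge⟩

theorem routeCycle_cases (x y : V) :
    (∃ i, x = u (i + 1) ∧ y = u i) ∨ (∃ i, x = u i ∧ y = u (i + 1)) ∨
      (routeCycle σ u x y = σ x y ∧ routeCycle σ u y x = σ y x) := by
  by_cases hdec : ∃ i, x = u (i + 1) ∧ y = u i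
  · exact .inl hdec
  by_cases hinc : ∃ i, x = u i ∧ y = u (i + 1)
  · exact .inr (.inl hinc)
  simp only [not_exists, not_and] at hdec hinc
  exact .inr (.inr ⟨routeCycle_apply_of_not_edge fun i => ⟨fun h => hdec i h.1 h.2,
    fun h => hinc i h.1 h.2⟩, routeCycle_apply_of_not_edge fun i => ⟨fun h => hinc i h.2 h.1,
    fun h => hdec i h.2 h.1⟩⟩)

theorem isState_routeCycle {cap : V → V → ℕ} (hu : Function.Injective u)
    (hfeas : ∀ i, 1 ≤ σ (u (i + 1)) (u i)) (hσ : IsState cap σ) :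
    IsState cap (routeCycle σ u) := by
  intro x y
  rw [← hσ x y]
  rcases routeCycle_cases (σ := σ) (u := u) x y with ⟨i, rfl, rfl⟩ | ⟨i, rfl, rfl⟩ | ⟨hxy, hyx⟩
  · rw [routeCycle_apply_succ_self, routeCycle_apply_self_succ hu]
    have := hfeas i
    omega
  · rw [routeCycle_apply_succ_self, routeCycle_apply_self_succ hu]
    have := hfeas i
    omega
  · rw [hxy, hyx]

variable [Fintype V]

def deficit (σ σ' : V → V → ℕ) : ℕ := ∑ x, ∑ y, (σ' x y - σ x y)

theorem deficit_routeCycle_lt {σ' : V → V → ℕ} (hu : Function.Injective u)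
    (hlt : ∀ i, σ (u i) (u (i + 1)) < σ' (u i) (u (i + 1)))
    (hgt : ∀ i, σ' (u (i + 1)) (u i) < σ (u (i + 1)) (u i)) :
    deficit (routeCycle σ u) σ' < deficit σ σ' := by
  have hle : ∀ x y, σ' x y - routeCycle σ u x y ≤ σ' x y - σ x y := fun x y => by
    rcases routeCycle_cases (σ := σ) (u := u) x y with ⟨i, rfl, rfl⟩ | ⟨i, rfl, rfl⟩ | ⟨hxy, -⟩
    · rw [routeCycle_apply_succ_self]
      have := hgt i
      omega
    · rw [routeCycle_apply_self_succ hu]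
      omega
    · rw [hxy]
  have hstrict : σ' (u 0) (u (0 + 1)) - routeCycle σ u (u 0) (u (0 + 1)) <
      σ' (u 0) (u (0 + 1)) - σ (u 0) (u (0 + 1)) := by
    rw [routeCycle_apply_self_succ hu]
    have := hlt 0
    omega
  exact sum_lt_sum (fun x _ => sum_le_sum fun y _ => hle x y)
    ⟨u 0, mem_univ _, sum_lt_sum (fun y _ => hle _ y) ⟨_, mem_univ _, hstrict⟩⟩

end Routing

theorem IsState.add_swap_eq {V : Type*} {cap σ σ' : V → V → ℕ} (hσ : IsState cap σ)
    (hσ' : IsState cap σ') (x y : V) : σ x y + σ y x = σ' x y + σ' y x := by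
  rw [hσ, hσ']

theorem exists_deficit_cycle {V : Type*} [Fintype V] {cap σ σ' : V → V → ℕ}
    (hσ : IsState cap σ) (hσ' : IsState cap σ') (hscore : score σ = score σ') (hne : σ ≠ σ') :
    ∃ (k : ℕ) (u : Fin (k + 3) → V), Function.Injective u ∧
      ∀ i, σ (u i) (u (i + 1)) < σ' (u i) (u (i + 1)) := by
  have hpair := hσ.add_swap_eq hσ'
  have hasymm : ∀ x y, σ x y < σ' x y → ¬σ y x < σ' y x := fun x y _ _ => by
    have := hpair x y
    omega
  have hsucc : ∀ x y, σ x y < σ' x y → ∃ z, σ y z < σ' y z := fun x y hxy => by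
    by_contra! hsurplus
    have hyx : σ' y x < σ y x := by
      have := hpair x y
      omega
    have := sum_lt_sum (fun z _ => hsurplus z) ⟨x, mem_univ x, hyx⟩
    exact this.ne (congrFun hscore y).symm
  obtain ⟨x, y, hxy⟩ : ∃ x y, σ x y < σ' x y := by
    obtain ⟨x, y, hxy⟩ : ∃ x y, σ x y ≠ σ' x y := by
      by_contra! h
      exact hne (funext fun x => funext (h x))
    rcases hxy.lt_or_gt with hlt | hgt
    · exact ⟨x, y, hlt⟩
    · refine ⟨y, x, ?_⟩
      have := hpair x y
      omega
  exact exists_injective_cycle (fun x y => σ x y < σ' x y) hasymm hsucc hxy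

theorem CycleReachable.of_score_eq {V : Type*} [Fintype V] {cap σ σ' : V → V → ℕ}
    (hσ : IsState cap σ) (hσ' : IsState cap σ') (hscore : score σ = score σ') :
    CycleReachable σ σ' := by
  by_cases heq : σ = σ'
  · exact heq ▸ .refl
  obtain ⟨k, u, hu, hlt⟩ := exists_deficit_cycle hσ hσ' hscore heq
  have hgt : ∀ i, σ' (u (i + 1)) (u i) < σ (u (i + 1)) (u i) := fun i => by
    have := hσ.add_swap_eq hσ' (u i) (u (i + 1))
    have := hlt i
    omega
  have hfeas : ∀ i, 1 ≤ σ (u (i + 1)) (u i) := fun i => Nat.one_le_of_lt (hgt i)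
  have hstep := cycleStep_routeCycle hu hfeas
  exact .head hstep
    (of_score_eq (isState_routeCycle hu hfeas hσ) hσ' (hstep.score_eq ▸ hscore))
termination_by deficit σ σ'
decreasing_by exact deficit_routeCycle_lt hu hlt hgt

theorem stmt1_general {V : Type*} [Fintype V]
    (cap : V → V → ℕ)
    (σ σ' : V → V → ℕ) (hσ : IsState cap σ) (hσ' : IsState cap σ') :
    CycleReachable σ σ' ↔ score σ = score σ' :=
  ⟨CycleReachable.score_eq, CycleReachable.of_score_eq hσ hσ'⟩

theorem stmt1 {V : Type*} [Fintype V]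
    (cap : V → V → ℕ) (hcap_symm : ∀ u v : V, cap u v = cap v u)
    (hcap_diag : ∀ v : V, cap v v = 0)
    (σ σ' : V → V → ℕ) (hσ : IsState cap σ) (hσ' : IsState cap σ') :
    CycleReachable σ σ' ↔ score σ = score σ' :=
  stmt1_general cap σ σ' hσ hσ'
end

section
/- Let cap be a credit network on a finite type V and let σ and σ' be two states such that σ' is cycle-reachable from σ. Then for every pair of vertices s ≠ t, the unit transaction (s,t) is feasible in σ if and only if it is feasible in σ'. -/
open Finset

/-!
Feasibility of `(s, t)` for `s ≠ t` is reachability of `t` from `s` along the edges `a → b` with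
`σ b a ≥ 1`, since a walk can always be shortcut to a path with distinct vertices. Routing a unit
around a cycle changes only edges between consecutive cycle vertices, and both before and after the
step the cycle vertices are mutually reachable: forwards along the cycle before, backwards after,
because each reversed edge has gained a unit. So every edge the step removes or adds is bridged by a
walk on the other side, and reachability does not change.
-/

open Relation

section Chain

variable {α : Type*} {r : α → α → Prop}
open Fin.NatCast

theorem List.exists_nodup_isChain_cons_of_reflTransGen {a b : α} (h : ReflTransGen r a b) :
    ∃ l : List α, (a :: l).IsChain r ∧ (a :: l).getLast (List.cons_ne_nil a l) = b ∧
      (a :: l).Nodup := by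
  induction h using ReflTransGen.head_induction_on with
  | refl => exact ⟨[], by simp, rfl, List.nodup_singleton b⟩
  | @head a c hac _ ih =>
    obtain ⟨l, hchain, hlast, hnodup⟩ := ih
    by_cases ha : a ∈ c :: l
    · obtain ⟨l₁, l₂, hsplit⟩ := List.append_of_mem ha
      refine ⟨l₂, hchain.suffix (hsplit ▸ List.suffix_append l₁ _), ?_,
        hnodup.sublist (hsplit ▸ (List.suffix_append l₁ _).sublist)⟩
      simpa [hsplit] using hlast
    · exact ⟨c :: l, hchain.cons_cons hac, by simpa using hlast, List.nodup_cons.2 ⟨ha, hnodup⟩⟩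

theorem Fin.reflTransGen_of_forall_rel_succ {n : ℕ} {u : Fin (n + 1) → α}
    (h : ∀ j, r (u j) (u (j + 1))) (i j : Fin (n + 1)) : ReflTransGen r (u i) (u j) := by
  have hforward (m : ℕ) : ReflTransGen r (u i) (u (i + m)) := by
    induction m with
    | zero => simpa using .refl
    | succ m ih => exact ih.tail (by simpa [add_assoc] using h (i + m))
  simpa using hforward (j - i).val

end Chain

section CreditNetwork

variable {V : Type*}

def CanPay (σ : V → V → ℕ) (a b : V) : Prop := 1 ≤ σ b a

theorem feasible_iff_reflTransGen_canPay {σ : V → V → ℕ} {s t : V} (hst : s ≠ t) :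
    Feasible σ s t ↔ ReflTransGen (CanPay σ) s t := by
  constructor
  · rintro ⟨k, u, -, -, rfl, rfl, hpay⟩
    have hreach (i : Fin (k + 1)) : ReflTransGen (CanPay σ) (u 0) (u i) := by
      induction i using Fin.induction with
      | zero => rfl
      | succ j ih => exact ih.tail (hpay j)
    exact hreach _
  · intro h
    obtain ⟨l, hchain, hlast, hnodup⟩ := List.exists_nodup_isChain_cons_of_reflTransGen h
    have hl : l ≠ [] := by rintro rfl; exact hst hlast
    refine ⟨l.length, fun i => (s :: l)[i], List.length_pos_iff.2 hl, ?_, rfl, ?_, fun i => ?_⟩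
    · exact fun i j hij => Fin.ext (Fin.mk.inj (List.nodup_iff_injective_getElem.1 hnodup hij))
    · simpa [List.getLast_eq_getElem] using hlast
    · exact List.isChain_iff_getElem.1 hchain i (by simp)

theorem reflTransGen_canPay_of_eq_off_cycle {σ τ : V → V → ℕ} {n : ℕ} {u : Fin (n + 1) → V}
    (hconn : ∀ i j, ReflTransGen (CanPay τ) (u i) (u j))
    (hoff : ∀ x y, (∀ i, ¬(x = u (i + 1) ∧ y = u i) ∧ ¬(x = u i ∧ y = u (i + 1))) →
      τ x y = σ x y)
    {a b : V} (hab : CanPay σ a b) : ReflTransGen (CanPay τ) a b := by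
  by_cases hedge : ∃ i, (b = u (i + 1) ∧ a = u i) ∨ (b = u i ∧ a = u (i + 1))
  · obtain ⟨i, ⟨rfl, rfl⟩ | ⟨rfl, rfl⟩⟩ := hedge <;> exact hconn _ _
  · push Not at hedge
    refine .single ?_
    rwa [CanPay, hoff b a fun i => ⟨fun h => (hedge i).1 h.1 h.2, fun h => (hedge i).2 h.1 h.2⟩]

theorem CycleStep.reflTransGen_canPay_eq {σ σ' : V → V → ℕ} (hstep : CycleStep σ σ') :
    ReflTransGen (CanPay σ) = ReflTransGen (CanPay σ') := by
  obtain ⟨k, u, -, hfeas, hroute, hoff⟩ := hstep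
  have hcycle : ∀ i j, ReflTransGen (CanPay σ) (u i) (u j) :=
    Fin.reflTransGen_of_forall_rel_succ hfeas
  have hcycle' : ∀ i j, ReflTransGen (CanPay σ') (u i) (u j) := fun i j =>
    reflTransGen_swap.1 <| Fin.reflTransGen_of_forall_rel_succ (r := Function.swap (CanPay σ'))
      (fun i => show 1 ≤ σ' (u i) (u (i + 1)) from (hroute i).2 ▸ Nat.le_add_left 1 _) j i
  exact le_antisymm
    (reflTransGen_closed fun _ _ => reflTransGen_canPay_of_eq_off_cycle hcycle' hoff)
    (reflTransGen_closed fun _ _ =>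
      reflTransGen_canPay_of_eq_off_cycle hcycle fun x y h => (hoff x y h).symm)

theorem CycleReachable.reflTransGen_canPay_eq {σ σ' : V → V → ℕ} (h : CycleReachable σ σ') :
    ReflTransGen (CanPay σ) = ReflTransGen (CanPay σ') := by
  induction h with
  | refl => rfl
  | tail _ hstep ih => exact ih.trans hstep.reflTransGen_canPay_eq

end CreditNetwork

theorem stmt2_general {V : Type*}
    (σ σ' : V → V → ℕ)
    (h : CycleReachable σ σ') :
    ∀ s t : V, s ≠ t → (Feasible σ s t ↔ Feasible σ' s t) := by
  intro s t hst
  rw [feasible_iff_reflTransGen_canPay hst, feasible_iff_reflTransGen_canPay hst,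
    h.reflTransGen_canPay_eq]

theorem stmt2 {V : Type*} [Fintype V]
    (cap : V → V → ℕ) (hcap_symm : ∀ u v : V, cap u v = cap v u)
    (hcap_diag : ∀ v : V, cap v v = 0)
    (σ σ' : V → V → ℕ) (hσ : IsState cap σ) (hσ' : IsState cap σ')
    (h : CycleReachable σ σ') :
    ∀ s t : V, s ≠ t → (Feasible σ s t ↔ Feasible σ' s t) :=
  stmt2_general σ σ' h
end

section
/- Uniform stationary distribution under symmetric transaction rates: let cap be a credit network on a finite type V, let σ_0 be a state, and let D be the (finite, nonempty) set of score vectors of states obtainable from σ_0 by finitely many routings of unit payments along feasible paths. Say that the transaction (s,t) (s ≠ t) is feasible from d ∈ D if it is feasible in some state with score vector d (equivalently, in every such state); when it is, the state resulting from routing it has score vector d[s ↦ d s + 1][t ↦ d t − 1]. Let λ : V → V → ℝ satisfy λ ≥ 0, λ v v = 0, λ s t = λ t s for all s,t, and ∑_{s,t} λ s t = 1. Define P : D → D → ℝ by: for d ≠ d', P d d' = ∑ λ s t over all pairs (s,t) with s ≠ t such that (s,t) is feasible from d and d' = d[s ↦ d s + 1][t ↦ d t − 1]; and P d d = 1 −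 ∑_{d' ∈ D, d' ≠ d} P d d'. Then P d d' = P d' d for all d, d' ∈ D, and the uniform distribution on D is stationary for P: for every d' ∈ D, ∑_{d ∈ D} (1/|D|) · P d d' = 1/|D|. -/
/-
If `(s,t)` is feasible from `d`, routing along a feasible path `u` gives a state in which the
reversed path is feasible, since each of its edges has just gained a unit; its score vector is
`d[s ↦ d s + 1][t ↦ d t − 1]`, from which routing `(t,s)` leads back to `d`. So the pairs `(s,t)`
contributing to `P d d'` are exactly the reverses of those contributing to `P d' d`, and symmetry
of `λ` makes `P` symmetric. A symmetric matrix with unit row sums has unit column sums, which is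
stationarity of the uniform distribution.
-/
open Finset

/-- Reachability by finitely many routings of unit payments along feasible paths. -/
def Reachable {V : Type*} (σ σ' : V → V → ℕ) : Prop :=
  Relation.ReflTransGen (fun a b => ∃ s t, s ≠ t ∧ RoutesUnit a b s t) σ σ'

/-- The transaction `(s,t)` is feasible from the score vector `d`:
it is feasible in some state with score vector `d`. -/
def FeasibleFrom {V : Type*} [Fintype V] (cap : V → V → ℕ) (d : V → ℕ) (s t : V) : Prop :=
  ∃ σ : V → V → ℕ, IsState cap σ ∧ score σ = d ∧ Feasible σ s t

/-- The score vector resulting from routing a unit payment from `s` to `t` in a state with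
score vector `d`: `d[s ↦ d s + 1][t ↦ d t − 1]`. -/
def nextScore {V : Type*} [DecidableEq V] (d : V → ℕ) (s t : V) : V → ℕ :=
  Function.update (Function.update d s (d s + 1)) t (d t - 1)

open Function

theorem Fin.sum_castSucc_sub_succ {M : Type*} [AddCommGroup M] :
    ∀ {k : ℕ} (g : Fin (k + 1) → M), ∑ i : Fin k, (g i.castSucc - g i.succ) = g 0 - g (last k)
  | 0, g => by simp
  | k + 1, g => by
    rw [Fin.sum_univ_castSucc]
    simp only [Fin.succ_castSucc]
    rw [Fin.sum_castSucc_sub_succ fun i => g i.castSucc]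
    simp only [Fin.castSucc_zero, Fin.succ_last]
    abel

section Routing

variable {V : Type*} {k : ℕ} {u : Fin (k + 1) → V}

theorem path_edge_eq_iff (hu : Injective u) {i j : Fin k} :
    u i.castSucc = u j.castSucc ∧ u i.succ = u j.succ ↔ i = j := by
  refine ⟨fun h => Fin.castSucc_injective _ (hu h.1), ?_⟩
  rintro rfl
  exact ⟨rfl, rfl⟩

theorem path_edge_ne_reverse (hu : Injective u) (i j : Fin k) :
    ¬(u i.succ = u j.castSucc ∧ u i.castSucc = u j.succ) := by
  rintro ⟨h₁, h₂⟩
  have e₁ := congrArg Fin.val (hu h₁)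
  have e₂ := congrArg Fin.val (hu h₂)
  simp only [Fin.val_succ, Fin.val_castSucc] at e₁ e₂
  omega

variable [DecidableEq V]

def pathFlow (u : Fin (k + 1) → V) (x y : V) : ℤ :=
  ∑ i : Fin k, ((if u i.castSucc = x ∧ u i.succ = y then 1 else 0) -
    (if u i.succ = x ∧ u i.castSucc = y then 1 else 0))

theorem pathFlow_swap (u : Fin (k + 1) → V) (x y : V) : pathFlow u y x = -pathFlow u x y := by
  simp only [pathFlow, ← sum_neg_distrib, neg_sub, and_comm]

theorem sum_pathFlow [Fintype V] (u : Fin (k + 1) → V) (v : V) :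
    ∑ y, pathFlow u v y = (if u 0 = v then 1 else 0) - (if u (Fin.last k) = v then 1 else 0) := by
  simp only [pathFlow]
  rw [sum_comm, ← Fin.sum_castSucc_sub_succ fun j => if u j = v then (1 : ℤ) else 0]
  refine sum_congr rfl fun i _ => ?_
  simp [sum_sub_distrib, ite_and]

theorem pathFlow_edge (hu : Injective u) (i : Fin k) :
    pathFlow u (u i.castSucc) (u i.succ) = 1 := by
  simp only [pathFlow, path_edge_eq_iff hu, if_neg (path_edge_ne_reverse hu _ _), sub_zero,
    sum_ite_eq', mem_univ, if_true]

theorem neg_pathFlow_le {σ : V → V → ℕ} (hu : Injective u)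
    (hσ : ∀ i : Fin k, 1 ≤ σ (u i.succ) (u i.castSucc)) (x y : V) :
    -pathFlow u x y ≤ σ x y := by
  calc -pathFlow u x y ≤ ∑ i : Fin k, if u i.succ = x ∧ u i.castSucc = y then (1 : ℤ) else 0 := by
        rw [pathFlow, ← sum_neg_distrib]
        gcongr with i
        split_ifs <;> simp
    _ ≤ σ x y := by
        by_cases h : ∃ i : Fin k, u i.succ = x ∧ u i.castSucc = y
        · obtain ⟨i, rfl, rfl⟩ := h
          have hi : ∀ j, (u j.succ = u i.succ ∧ u j.castSucc = u i.castSucc) ↔ j = i :=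
            fun j => and_comm.trans (path_edge_eq_iff hu)
          simp only [hi, sum_ite_eq', mem_univ, if_true]
          exact_mod_cast hσ i
        · rw [sum_eq_zero fun i _ => if_neg fun hi => h ⟨i, hi⟩]
          positivity

/-- Routing a unit payment along `u` adds `pathFlow u` to `σ`; along a feasible path the sum is
nonnegative (`neg_pathFlow_le`), so `Int.toNat` does not truncate. -/
def route (σ : V → V → ℕ) (u : Fin (k + 1) → V) : V → V → ℕ :=
  fun x y => (σ x y + pathFlow u x y).toNat

end Routing

theorem cast_nextScore {V : Type*} [DecidableEq V] {d : V → ℕ} {s t : V} (hst : s ≠ t)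
    (ht : 1 ≤ d t) (v : V) :
    (nextScore d s t v : ℤ) = d v + (if s = v then 1 else 0) - (if t = v then 1 else 0) := by
  simp only [nextScore, update_apply]
  grind

namespace FeasiblePath

variable {V : Type*} {σ : V → V → ℕ} {s t : V} {k : ℕ} {u : Fin (k + 1) → V}

theorem ne_s5 (hp : FeasiblePath σ s t k u) : s ≠ t := by
  obtain ⟨hk, hu, rfl, rfl, -⟩ := hp
  intro h
  have := congrArg Fin.val (hu h)
  simp only [Fin.val_zero, Fin.val_last] at this
  omega

theorem reverse {σ' : V → V → ℕ} (hp : FeasiblePath σ s t k u)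
    (h : ∀ i : Fin k, 1 ≤ σ' (u i.castSucc) (u i.succ)) :
    FeasiblePath σ' t s k (u ∘ Fin.rev) := by
  obtain ⟨hk, hu, hs, ht, -⟩ := hp
  refine ⟨hk, hu.comp Fin.rev_injective, by simp [ht], by simp [hs], fun i => ?_⟩
  simpa only [comp_apply, Fin.rev_succ, Fin.rev_castSucc] using h i.rev

variable [DecidableEq V] (hp : FeasiblePath σ s t k u)
include hp

theorem cast_route (x y : V) : (route σ u x y : ℤ) = σ x y + pathFlow u x y :=
  Int.toNat_of_nonneg (by linarith [neg_pathFlow_le hp.2.1 hp.2.2.2.2 x y])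

theorem isState_route {cap : V → V → ℕ} (hσ : IsState cap σ) : IsState cap (route σ u) := by
  intro x y
  have := hσ x y
  zify at this ⊢
  rw [hp.cast_route, hp.cast_route, pathFlow_swap]
  linarith

theorem feasible_route : Feasible (route σ u) t s := by
  refine ⟨k, u ∘ Fin.rev, hp.reverse fun i => ?_⟩
  zify
  rw [hp.cast_route, pathFlow_edge hp.2.1]
  omega

theorem cast_score_route [Fintype V] (v : V) :
    (score (route σ u) v : ℤ) = score σ v + (if s = v then 1 else 0) - (if t = v then 1 else 0) := by
  simp only [score, Nat.cast_sum, hp.cast_route, sum_add_distrib, sum_pathFlow, hp.2.2.1,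
    hp.2.2.2.1]
  ring

theorem one_le_score [Fintype V] : 1 ≤ score σ t := by
  have := hp.cast_score_route t
  simp only [if_neg hp.ne_s5, if_true, add_zero] at this
  omega

theorem score_route [Fintype V] : score (route σ u) = nextScore (score σ) s t := by
  funext v
  exact_mod_cast (hp.cast_score_route v).trans (cast_nextScore hp.ne_s5 hp.one_le_score v).symm

end FeasiblePath

theorem nextScore_nextScore {V : Type*} [DecidableEq V] {d : V → ℕ} {s t : V} (hst : s ≠ t)
    (ht : 1 ≤ d t) : nextScore (nextScore d s t) t s = d := by
  have hs : 1 ≤ nextScore d s t s := by simp [nextScore, update_of_ne hst]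
  funext v
  zify
  rw [cast_nextScore hst.symm hs, cast_nextScore hst ht]
  ring

section ScoreChain

variable {V : Type*} [Fintype V] [DecidableEq V] {cap : V → V → ℕ} {d d' : V → ℕ} {s t : V}

theorem FeasibleFrom.reverse (h : FeasibleFrom cap d s t) :
    s ≠ t ∧ FeasibleFrom cap (nextScore d s t) t s ∧ nextScore (nextScore d s t) t s = d := by
  obtain ⟨σ, hσ, rfl, k, u, hp⟩ := h
  exact ⟨hp.ne_s5, ⟨route σ u, hp.isState_route hσ, hp.score_route, hp.feasible_route⟩,
    nextScore_nextScore hp.ne_s5 hp.one_le_score⟩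

theorem transition_comm :
    (s ≠ t ∧ FeasibleFrom cap d s t ∧ d' = nextScore d s t) ↔
      (t ≠ s ∧ FeasibleFrom cap d' t s ∧ d = nextScore d' t s) := by
  suffices ∀ {d d' : V → ℕ} {s t : V}, s ≠ t ∧ FeasibleFrom cap d s t ∧ d' = nextScore d s t →
      t ≠ s ∧ FeasibleFrom cap d' t s ∧ d = nextScore d' t s from ⟨this, this⟩
  rintro d d' s t ⟨-, h, rfl⟩
  obtain ⟨hst, h', hd⟩ := h.reverse
  exact ⟨hst.symm, h', hd.symm⟩

end ScoreChain

open Classical in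
theorem stmt5_general {V : Type*} [Fintype V] [DecidableEq V]
    (cap : V → V → ℕ)
    (D : Finset (V → ℕ))
    (lam : V → V → ℝ)
    (hlam_symm : ∀ s t : V, lam s t = lam t s)
    (P : (V → ℕ) → (V → ℕ) → ℝ)
    (hP_off : ∀ d ∈ D, ∀ d' ∈ D, d ≠ d' →
      P d d' = ∑ s : V, ∑ t : V,
        if s ≠ t ∧ FeasibleFrom cap d s t ∧ d' = nextScore d s t then lam s t else 0)
    (hP_diag : ∀ d ∈ D, P d d = 1 - ∑ d' ∈ D.erase d, P d d') :
    (∀ d ∈ D, ∀ d' ∈ D, P d d' = P d' d) ∧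
    (∀ d' ∈ D, ∑ d ∈ D, (1 / (D.card : ℝ)) * P d d' = 1 / (D.card : ℝ)) := by
  have hsymm : ∀ d ∈ D, ∀ d' ∈ D, P d d' = P d' d := by
    intro d hd d' hd'
    rcases eq_or_ne d d' with rfl | hne
    · rfl
    rw [hP_off d hd d' hd' hne, hP_off d' hd' d hd hne.symm, sum_comm]
    refine sum_congr rfl fun t _ => sum_congr rfl fun s _ => ?_
    rw [hlam_symm, if_congr transition_comm rfl rfl]
  refine ⟨hsymm, fun d' hd' => ?_⟩
  have hrow : ∑ d ∈ D, P d' d = 1 := by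
    rw [← sum_erase_add D _ hd', hP_diag d' hd']
    ring
  rw [← mul_sum, sum_congr rfl fun d hd => hsymm d hd d' hd', hrow, mul_one]

open Classical in
/-- Under a symmetric transaction-rate matrix, the induced chain on score vectors is
symmetric and the uniform distribution on the accessible score vectors is stationary. -/
theorem stmt5 {V : Type*} [Fintype V] [DecidableEq V]
    (cap : V → V → ℕ) (hcap_symm : ∀ u v : V, cap u v = cap v u)
    (hcap_diag : ∀ v : V, cap v v = 0)
    (σ₀ : V → V → ℕ) (hσ₀ : IsState cap σ₀)
    (D : Finset (V → ℕ))
    (hD : ∀ d : V → ℕ, d ∈ D ↔ ∃ σ : V → V → ℕ, Reachable σ₀ σ ∧ score σ = d)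
    (lam : V → V → ℝ) (hlam_nonneg : ∀ s t : V, 0 ≤ lam s t)
    (hlam_diag : ∀ v : V, lam v v = 0)
    (hlam_symm : ∀ s t : V, lam s t = lam t s)
    (hlam_sum : ∑ s : V, ∑ t : V, lam s t = 1)
    (P : (V → ℕ) → (V → ℕ) → ℝ)
    (hP_off : ∀ d ∈ D, ∀ d' ∈ D, d ≠ d' →
      P d d' = ∑ s : V, ∑ t : V,
        if s ≠ t ∧ FeasibleFrom cap d s t ∧ d' = nextScore d s t then lam s t else 0)
    (hP_diag : ∀ d ∈ D, P d d = 1 - ∑ d' ∈ D.erase d, P d d') :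
    (∀ d ∈ D, ∀ d' ∈ D, P d d' = P d' d) ∧
    (∀ d' ∈ D, ∑ d ∈ D, (1 / (D.card : ℝ)) * P d d' = 1 / (D.card : ℝ)) :=
  stmt5_general cap D lam hlam_symm P hP_off hP_diag
end

section
/- Reachability between arbitrary states: let cap be a credit network on a finite type V and let σ and σ' be any two states of the network. Then there exists a finite sequence of states σ = τ_0, τ_1, …, τ_N = σ' in which each τ_{j+1} is obtained from τ_j by routing a unit payment along a feasible path consisting of a single edge (i.e., a path u_0, u_1 with τ_j u_1 u_0 ≥ 1). -/
open Finset

/-- `σ'` is obtained from `σ` by routing a unit payment along a feasible path consisting of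
a single edge: a path `a, b` with `σ b a ≥ 1`. -/
def EdgeStep {V : Type*} (σ σ' : V → V → ℕ) : Prop :=
  ∃ a b : V, a ≠ b ∧ 1 ≤ σ b a ∧
    σ' b a = σ b a - 1 ∧ σ' a b = σ a b + 1 ∧
    ∀ x y : V, ¬(x = a ∧ y = b) → ¬(x = b ∧ y = a) → σ' x y = σ x y

/-! Starting from `τ`, as long as `τ ≠ σ'` some pair has `τ a b < σ' a b`; then also
`σ' b a < τ b a`, so a unit can be routed along the edge `a, b`. This lowers the total
shortfall `∑ (σ' x y - τ x y)` by one, which bounds the length of the resulting sequence. -/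

namespace IsState

variable {V : Type*} {cap τ σ' : V → V → ℕ}

theorem eq_of_le (hτ : IsState cap τ) (hσ' : IsState cap σ') (hle : ∀ u v, σ' u v ≤ τ u v) :
    τ = σ' := by
  funext u v
  have := hτ u v; have := hσ' u v; have := hle u v; have := hle v u
  omega

theorem exists_lt_of_ne (hτ : IsState cap τ) (hσ' : IsState cap σ') (hne : τ ≠ σ') :
    ∃ a b, a ≠ b ∧ τ a b < σ' a b ∧ σ' b a < τ b a := by
  obtain ⟨a, b, hab⟩ : ∃ a b, τ a b < σ' a b := by
    by_contra! hle
    exact hne (hτ.eq_of_le hσ' hle)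
  have := hτ a b; have := hσ' a b
  refine ⟨a, b, ?_, hab, by omega⟩
  rintro rfl
  omega

end IsState

section RouteEdge

variable {V : Type*} [DecidableEq V]

def routeEdge (τ : V → V → ℕ) (a b : V) : V → V → ℕ := fun x y =>
  if x = a ∧ y = b then τ x y + 1 else if x = b ∧ y = a then τ x y - 1 else τ x y

variable {τ : V → V → ℕ} {a b : V}

theorem routeEdge_apply_edge (hab : a ≠ b) :
    routeEdge τ a b a b = τ a b + 1 ∧ routeEdge τ a b b a = τ b a - 1 := by
  simp [routeEdge, hab, hab.symm]

theorem routeEdge_apply_of_ne_edge (x y : V) (h₁ : ¬(x = a ∧ y = b)) (h₂ : ¬(x = b ∧ y = a)) :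
    routeEdge τ a b x y = τ x y := by
  simp [routeEdge, h₁, h₂]

theorem edgeStep_routeEdge (hab : a ≠ b) (hba : 1 ≤ τ b a) : EdgeStep τ (routeEdge τ a b) :=
  ⟨a, b, hab, hba, (routeEdge_apply_edge hab).2, (routeEdge_apply_edge hab).1,
    routeEdge_apply_of_ne_edge⟩

theorem IsState.routeEdge {cap : V → V → ℕ} (hτ : IsState cap τ) (hab : a ≠ b)
    (hba : 1 ≤ τ b a) : IsState cap (routeEdge τ a b) := by
  intro u v
  obtain ⟨hab', hba'⟩ := routeEdge_apply_edge (τ := τ) hab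
  by_cases h₁ : u = a ∧ v = b
  · obtain ⟨rfl, rfl⟩ := h₁
    have := hτ u v; omega
  by_cases h₂ : u = b ∧ v = a
  · obtain ⟨rfl, rfl⟩ := h₂
    have := hτ u v; omega
  rw [routeEdge_apply_of_ne_edge u v h₁ h₂, routeEdge_apply_of_ne_edge v u (by tauto) (by tauto)]
  exact hτ u v

end RouteEdge

def shortfall {V : Type*} [Fintype V] (σ' τ : V → V → ℕ) : ℕ :=
  ∑ p : V × V, (σ' p.1 p.2 - τ p.1 p.2)

theorem shortfall_routeEdge_lt {V : Type*} [Fintype V] [DecidableEq V] {σ' τ : V → V → ℕ}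
    {a b : V} (hab : a ≠ b) (hlt : τ a b < σ' a b) (hgt : σ' b a < τ b a) :
    shortfall σ' (routeEdge τ a b) < shortfall σ' τ := by
  obtain ⟨hab', hba'⟩ := routeEdge_apply_edge (τ := τ) hab
  refine Finset.sum_lt_sum (fun ⟨x, y⟩ _ => ?_) ⟨(a, b), mem_univ _, by dsimp only; omega⟩
  dsimp only
  by_cases h₁ : x = a ∧ y = b
  · obtain ⟨rfl, rfl⟩ := h₁; omega
  by_cases h₂ : x = b ∧ y = a
  · obtain ⟨rfl, rfl⟩ := h₂; omega
  rw [routeEdge_apply_of_ne_edge x y h₁ h₂]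

theorem IsState.reflTransGen_edgeStep {V : Type*} [Fintype V] {cap τ σ' : V → V → ℕ}
    (hτ : IsState cap τ) (hσ' : IsState cap σ') : Relation.ReflTransGen EdgeStep τ σ' := by
  classical
  induction hn : shortfall σ' τ using Nat.strong_induction_on generalizing τ with
  | _ n ih =>
  by_cases hne : τ = σ'
  · rw [hne]
  obtain ⟨a, b, hab, hlt, hgt⟩ := hτ.exists_lt_of_ne hσ' hne
  have hba : 1 ≤ τ b a := by omega
  exact .head (edgeStep_routeEdge hab hba)
    (ih _ (hn ▸ shortfall_routeEdge_lt hab hlt hgt) (hτ.routeEdge hab hba) rfl)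

theorem stmt6_general {V : Type*} [Fintype V]
    (cap : V → V → ℕ)
    (σ σ' : V → V → ℕ) (hσ : IsState cap σ) (hσ' : IsState cap σ') :
    Relation.ReflTransGen EdgeStep σ σ' :=
  hσ.reflTransGen_edgeStep hσ'

/-- Any two states of a credit network are connected by a finite sequence of single-edge
unit routings. -/
theorem stmt6 {V : Type*} [Fintype V]
    (cap : V → V → ℕ) (hcap_symm : ∀ u v : V, cap u v = cap v u)
    (hcap_diag : ∀ v : V, cap v v = 0)
    (σ σ' : V → V → ℕ) (hσ : IsState cap σ) (hσ' : IsState cap σ') :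
    Relation.ReflTransGen EdgeStep σ σ' :=
  stmt6_general cap σ σ' hσ hσ'
end

section
/- Forest-count inequality underlying the bankruptcy bound: let (V, ι, ε) be a finite loopless multigraph, let v ∈ V, and let d_v be the number of edges incident to v, i.e., d_v = |{e ∈ ι | v ∈ ε e}|. Then the number of subsets F ⊆ ι that are forests is at least (d_v + 1) times the number of subsets F ⊆ ι that are forests and contain no edge incident to v. -/
/-- A subset `F` of the edge indices of a multigraph with endpoint map `ε` is a forest if it
contains no cycle: no `k ≥ 2` pairwise distinct vertices `v₀, …, v_{k−1}` and pairwise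
distinct edges `e₀, …, e_{k−1} ∈ F` with `ε eᵢ = {vᵢ, v_{(i+1) mod k}}`. -/
def IsForest {V ι : Type*} (ε : ι → Sym2 V) (F : Finset ι) : Prop :=
  ¬ ∃ (k : ℕ) (v : Fin (k + 2) → V) (e : Fin (k + 2) → ι),
      Function.Injective v ∧ Function.Injective e ∧
      (∀ i, e i ∈ F) ∧ ∀ i, ε (e i) = s(v i, v (i + 1))

/-!
Adding to a forest that avoids `v` either nothing or a single edge at `v` gives a forest, since
a cycle through the new edge would have to leave `v` along a second edge at `v`. The added edge
and the original forest are recovered as the edges at `v` and the edges away from `v`, so this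
is an injection of `d_v + 1` copies of the forests avoiding `v` into all forests.
-/

open Finset

lemma exists_ne_mem_of_cycle {V ι : Type*} {ε : ι → Sym2 V} {k : ℕ} {w : Fin (k + 2) → V}
    {f : Fin (k + 2) → ι} (hf : Function.Injective f) (hεf : ∀ i, ε (f i) = s(w i, w (i + 1)))
    {j : Fin (k + 2)} {x : V} (hx : x ∈ ε (f j)) : ∃ i, f i ≠ f j ∧ x ∈ ε (f i) := by
  have hone : (1 : Fin (k + 2)) ≠ 0 := by simp
  rw [hεf, Sym2.mem_iff] at hx
  rcases hx with rfl | rfl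
  · refine ⟨j - 1, hf.ne fun h => hone ?_, by simp [hεf]⟩
    rwa [sub_eq_self] at h
  · refine ⟨j + 1, hf.ne fun h => hone ?_, by simp [hεf]⟩
    simp at h

lemma IsForest.insert_of_forall_notMem {V ι : Type*} [DecidableEq ι] {ε : ι → Sym2 V} {v : V}
    {F : Finset ι} (hF : IsForest ε F) (hFv : ∀ e ∈ F, v ∉ ε e) {e : ι} (he : v ∈ ε e) :
    IsForest ε (insert e F) := by
  rintro ⟨k, w, f, hw, hf, hmem, hεf⟩
  by_cases hall : ∀ i, f i ∈ F
  · exact hF ⟨k, w, f, hw, hf, hall, hεf⟩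
  push Not at hall
  obtain ⟨j, hj⟩ := hall
  have hje : f j = e := by simpa [hj] using hmem j
  obtain ⟨i, hij, hvi⟩ := exists_ne_mem_of_cycle hf hεf (hje ▸ he : v ∈ ε (f j))
  have hiF : f i ∈ F := by simpa [← hje, hij] using hmem i
  exact hFv _ hiF hvi

lemma Option.toFinset_union_injOn {α : Type*} [DecidableEq α] (p : α → Prop) [DecidablePred p] :
    Set.InjOn (fun x : Option α × Finset α => x.1.toFinset ∪ x.2)
      {x | (∀ a ∈ x.1, p a) ∧ ∀ a ∈ x.2, ¬ p a} := by
  have filter_pos : ∀ (o : Option α) (F : Finset α), (∀ a ∈ o, p a) → (∀ a ∈ F, ¬ p a) →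
      (o.toFinset ∪ F).filter p = o.toFinset := by
    intro o F ho hF
    ext a
    simp only [mem_filter, mem_union, Option.mem_toFinset]
    grind
  have filter_neg : ∀ (o : Option α) (F : Finset α), (∀ a ∈ o, p a) → (∀ a ∈ F, ¬ p a) →
      (o.toFinset ∪ F).filter (¬ p ·) = F := by
    intro o F ho hF
    ext a
    simp only [mem_filter, mem_union, Option.mem_toFinset]
    grind
  rintro ⟨o₁, F₁⟩ ⟨ho₁, hF₁⟩ ⟨o₂, F₂⟩ ⟨ho₂, hF₂⟩ heq
  dsimp only at heq ho₁ hF₁ ho₂ hF₂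
  have hF : F₁ = F₂ := by
    rw [← filter_neg _ _ ho₁ hF₁, ← filter_neg _ _ ho₂ hF₂, heq]
  have ho : o₁.toFinset = o₂.toFinset := by
    rw [← filter_pos _ _ ho₁ hF₁, ← filter_pos _ _ ho₂ hF₂, heq]
  obtain rfl : o₁ = o₂ := by
    cases o₁ <;> cases o₂ <;> simp_all [eq_comm]
  rw [hF]

lemma card_forests_avoiding_mul_le {V ι : Type*} [Fintype ι] [DecidableEq ι] (ε : ι → Sym2 V)
    (v : V) [DecidablePred (IsForest ε)] [DecidablePred (fun e => v ∈ ε e)] :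
    (#{e | v ∈ ε e} + 1) * #{F | IsForest ε F ∧ ∀ e ∈ F, v ∉ ε e} ≤ #{F | IsForest ε F} := by
  rw [← card_insertNone, ← card_product]
  refine card_le_card_of_injOn (fun x => x.1.toFinset ∪ x.2) ?_ ?_
  · rintro ⟨o, F⟩ hx
    simp only [coe_product, Set.mem_prod, mem_coe, mem_insertNone, mem_filter, mem_univ,
      true_and] at hx ⊢
    obtain ⟨ho, hF, hFv⟩ := hx
    cases o with
    | none => simpa using hF
    | some e => simpa using hF.insert_of_forall_notMem hFv (ho e rfl)
  · refine (Option.toFinset_union_injOn (v ∈ ε ·)).mono ?_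
    rintro ⟨o, F⟩ hx
    simp only [coe_product, Set.mem_prod, mem_coe, mem_insertNone, mem_filter, mem_univ,
      true_and] at hx
    exact ⟨hx.1, hx.2.2⟩

theorem stmt7_general {V ι : Type*} [Fintype ι]
    (ε : ι → Sym2 V) (v : V) :
    ({e : ι | v ∈ ε e}.ncard + 1) *
        {F : Finset ι | IsForest ε F ∧ ∀ e ∈ F, v ∉ ε e}.ncard ≤
      {F : Finset ι | IsForest ε F}.ncard := by
  classical
  simp only [Set.ncard_eq_toFinset_card', Set.toFinset_ofPred]
  exact card_forests_avoiding_mul_le ε v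

/-- The number of forests of a finite loopless multigraph is at least `(d_v + 1)` times the
number of forests containing no edge incident to `v`. -/
theorem stmt7 {V ι : Type*} [Fintype V] [Fintype ι]
    (ε : ι → Sym2 V) (hε : ∀ e : ι, ¬ (ε e).IsDiag) (v : V) :
    ({e : ι | v ∈ ε e}.ncard + 1) *
        {F : Finset ι | IsForest ε F ∧ ∀ e ∈ F, v ∉ ε e}.ncard ≤
      {F : Finset ι | IsForest ε F}.ncard :=
  stmt7_general ε v
end

section
/- In a credit network whose underlying graph is acyclic, the score vector determines the state: let cap be a credit network on a finite type V such that the simple graph on V with u adjacent to v iff cap u v > 0 is acyclic (a forest). If σ and σ' are states with score σ = score σ', then σ = σ'. (Hence the cycle-reachability equivalence classes of such a network are singletons.) -/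
open Finset

/-! The difference `σ - σ'` of two states is an antisymmetric integer flow supported on the
edges of the forest and, since the scores agree, without divergence at any vertex. Such a flow
vanishes: if its support were nonempty it would be a forest with an edge, hence have a leaf `v`,
and the divergence at `v` would be the value of the flow on the single edge at `v`. -/

namespace SimpleGraph

variable {V : Type*} {G : SimpleGraph V}

theorem IsAcyclic.exists_existsUnique_adj [Finite V] (hG : G.IsAcyclic) {a b : V}
    (hab : G.Adj a b) : ∃ v, ∃! w, G.Adj v w := by
  have : Nonempty V := ⟨a⟩
  obtain ⟨u, v, p, hp, hmax⟩ := Walk.exists_isPath_forall_isPath_length_le_length G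
  have hnil : ¬p.Nil := by
    rw [← Walk.length_eq_zero_iff]
    have := hmax a b hab.toWalk (Walk.IsPath.of_adj hab)
    simp only [Walk.length_cons, Walk.length_nil] at this
    omega
  refine ⟨u, p.snd, p.adj_snd hnil, fun w hw => hG.eq_snd_of_adj_start hp hw ?_⟩
  by_contra hw'
  have := hmax _ _ _ (hp.cons (h := hw.symm) hw')
  simp at this

theorem IsAcyclic.eq_zero_of_antisymm_of_sum_eq_zero {M : Type*} [AddCommGroup M] [Fintype V]
    (hG : G.IsAcyclic) (f : V → V → M) (hanti : ∀ u v, f v u = -f u v)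
    (hsupp : ∀ u v, f u v ≠ 0 → G.Adj u v) (hsum : ∀ v, ∑ u, f v u = 0) : f = 0 := by
  classical
  let H := SimpleGraph.fromRel fun u v => f u v ≠ 0
  have hH : ∀ {u v}, H.Adj u v ↔ f u v ≠ 0 := by
    intro u v
    simp only [H, fromRel_adj, hanti u v, ne_eq, neg_eq_zero, or_self, and_iff_right_iff_imp]
    exact fun h => (hsupp u v h).ne
  by_contra hf
  obtain ⟨a, b, hab⟩ : ∃ a b, f a b ≠ 0 := by
    by_contra! h
    exact hf (funext fun a => funext (h a))
  obtain ⟨v, w, hvw, hw⟩ := (hG.anti fun u v huv => hsupp u v (hH.1 huv)).exists_existsUnique_adj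
    (hH.2 hab)
  have : ∑ u, f v u = f v w :=
    sum_eq_single w (fun u _ hu => not_not.1 fun h => hu (hw u (hH.2 h))) (by simp)
  exact hH.1 hvw (this ▸ hsum v)

end SimpleGraph

theorem stmt8_general {V : Type*} [Fintype V]
    (cap : V → V → ℕ)
    (G : SimpleGraph V) (hG : ∀ u v : V, G.Adj u v ↔ 0 < cap u v)
    (hacyc : G.IsAcyclic)
    (σ σ' : V → V → ℕ) (hσ : IsState cap σ) (hσ' : IsState cap σ')
    (h : score σ = score σ') : σ = σ' := by
  set f : V → V → ℤ := fun u v => σ u v - σ' u v with hf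
  have hanti : ∀ u v, f v u = -f u v := by
    intro u v
    have := hσ u v
    have := hσ' u v
    simp only [hf]
    omega
  have hsupp : ∀ u v, f u v ≠ 0 → G.Adj u v := by
    intro u v huv
    have := hσ u v
    have := hσ' u v
    rw [hG]
    simp only [hf] at huv
    omega
  have hsum : ∀ v, ∑ u, f v u = 0 := by
    intro v
    simp only [hf, sum_sub_distrib, ← Nat.cast_sum]
    exact sub_eq_zero.2 (congrArg _ (congrFun h v))
  have hf0 := hacyc.eq_zero_of_antisymm_of_sum_eq_zero f hanti hsupp hsum
  funext u v
  simpa [hf, sub_eq_zero] using congrFun₂ hf0 u v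

/-- In a credit network whose underlying graph is acyclic, the score vector determines
the state. -/
theorem stmt8 {V : Type*} [Fintype V]
    (cap : V → V → ℕ) (hcap_symm : ∀ u v : V, cap u v = cap v u)
    (hcap_diag : ∀ v : V, cap v v = 0)
    (G : SimpleGraph V) (hG : ∀ u v : V, G.Adj u v ↔ 0 < cap u v)
    (hacyc : G.IsAcyclic)
    (σ σ' : V → V → ℕ) (hσ : IsState cap σ) (hσ' : IsState cap σ')
    (h : score σ = score σ') : σ = σ' :=
  stmt8_general cap G hG hacyc σ σ' hσ hσ' h
end

section
/- Transaction feasibility count in trees: let T be a tree (a connected acyclic simple graph) on a finite vertex type V with m edges, let c ≥ 1 be an integer, and consider the credit network with cap u v = c if u and v are adjacent in T and cap u v = 0 otherwise. Fix vertices s ≠ t at tree-distance l in T. Then the number of states σ of this network in which the unit transaction (s,t) is feasible equals c^l · (c+1)^{m−l}. Since the total number of states is (c+1)^m, under the uniform distribution on states the probability that the unit transaction (s,t) is feasible equals (c/(c+1))^l. -/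
open Finset

/-!
Any unit of balance `σ x y ≥ 1` forces `x ~ y` in `T`, so a feasible route is a path of `T`,
hence the unique path from `s` to `t`, of length `l = dist s t`: the transaction is feasible
iff each of these `l` edges can pass a unit forward. A state is a free choice, on each edge,
of the balance `0, …, c` in one fixed direction. Directing the path edges backwards,
feasibility asks for a balance in `1, …, c` on the `l` path edges and nothing on the other
`m - l` edges, which gives `c ^ l * (c + 1) ^ (m - l)` feasible states out of `(c + 1) ^ m`.
-/

namespace SimpleGraph

variable {V : Type*} {G : SimpleGraph V}

theorem Walk.isChain_support_iff_forall_darts {R : V → V → Prop} {u v : V} (p : G.Walk u v) :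
    p.support.IsChain R ↔ ∀ d ∈ p.darts, R d.fst d.snd := by
  induction p with
  | nil => simp
  | cons h p ih => cases p <;> simp_all

theorem exists_dart_edge_eq (e : G.edgeSet) : ∃ d : G.Dart, d.edge = e := by
  obtain ⟨e, he⟩ := e
  induction e using Sym2.ind with
  | _ x y => exact ⟨⟨(x, y), he⟩, rfl⟩

theorem exists_orientation_reversing (D : List G.Dart) (hD : (D.map Dart.edge).Nodup) :
    ∃ o : G.edgeSet → G.Dart, (∀ e, (o e).edge = e) ∧
      ∀ d ∈ D, o ⟨d.edge, d.edge_mem⟩ = d.symm := by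
  have key (e : G.edgeSet) :
      ∃ d' : G.Dart, d'.edge = e ∧ ∀ d ∈ D, d.edge = e → d' = d.symm := by
    by_cases he : ∃ d ∈ D, d.edge = e
    · obtain ⟨d, hd, hde⟩ := he
      refine ⟨d.symm, d.edge_symm.trans hde, fun d' hd' h => ?_⟩
      rw [List.inj_on_of_nodup_map hD hd' hd (h.trans hde.symm)]
    · obtain ⟨d', hd'⟩ := G.exists_dart_edge_eq e
      exact ⟨d', hd', fun d hd h => absurd ⟨d, hd, h⟩ he⟩
  choose o ho hoD using key
  exact ⟨o, ho, fun d hd => hoD _ d hd rfl⟩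

end SimpleGraph

open SimpleGraph

section Feasibility

variable {V : Type*} {G : SimpleGraph V} {σ : V → V → ℕ} {s t : V}

theorem feasible_iff_exists_isPath (hσ : ∀ x y, 1 ≤ σ x y → G.Adj x y) (hst : s ≠ t) :
    Feasible σ s t ↔
      ∃ q : G.Walk s t, q.IsPath ∧ q.support.IsChain (fun x y => 1 ≤ σ y x) := by
  constructor
  · rintro ⟨k, u, -, hinj, rfl, rfl, hpos⟩
    have hchain : (List.ofFn u).IsChain (fun x y => 1 ≤ σ y x) :=
      List.isChain_ofFn.2 fun i hi => hpos ⟨i, by omega⟩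
    let q := Walk.ofSupport (List.ofFn u) (by simp) (hchain.imp fun x y h => (hσ y x h).symm)
    refine ⟨q.copy (by simp) (List.getLast_ofFn _), ?_, ?_⟩
    · simpa [Walk.isPath_def, q] using List.nodup_ofFn.2 hinj
    · simpa [q] using hchain
  · rintro ⟨q, hq, hchain⟩
    have hlen : 1 ≤ q.length := Nat.one_le_iff_ne_zero.2 fun h => hst (q.eq_of_length_eq_zero h)
    refine ⟨q.length, fun i => q.support[i]'(by simpa using i.isLt), hlen, ?_, by simp,
      by simp, fun i => ?_⟩
    · intro i j hij
      exact Fin.ext ((hq.support_nodup.getElem_inj_iff).1 hij)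
    · exact hchain.getElem i (by simp)

theorem SimpleGraph.IsAcyclic.feasible_iff (hG : G.IsAcyclic)
    (hσ : ∀ x y, 1 ≤ σ x y → G.Adj x y) (hst : s ≠ t) {p : G.Walk s t} (hp : p.IsPath) :
    Feasible σ s t ↔ ∀ d ∈ p.darts, 1 ≤ σ d.snd d.fst := by
  rw [feasible_iff_exists_isPath hσ hst,
    ← p.isChain_support_iff_forall_darts (R := fun x y => 1 ≤ σ y x)]
  refine ⟨fun ⟨q, hq, hchain⟩ => ?_, fun h => ⟨p, hp, h⟩⟩
  have hqp : q = p := congrArg Subtype.val ((hG.subsingleton_path s t).elim ⟨q, hq⟩ ⟨p, hp⟩)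
  rwa [← hqp]

end Feasibility

section Counting

variable {V : Type*} {G : SimpleGraph V} [DecidableRel G.Adj] {c : ℕ} {σ τ : V → V → ℕ}

def uniformCap (G : SimpleGraph V) [DecidableRel G.Adj] (c : ℕ) : V → V → ℕ :=
  fun u v => if G.Adj u v then c else 0

namespace IsState

theorem eq_zero_of_not_adj (hσ : IsState (uniformCap G c) σ) {x y : V} (h : ¬G.Adj x y) :
    σ x y = 0 := by
  have := hσ x y
  simp only [uniformCap, h, if_false] at this
  omega

theorem adj_of_pos (hσ : IsState (uniformCap G c) σ) {x y : V} (h : 1 ≤ σ x y) :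
    G.Adj x y := by
  by_contra hxy
  rw [hσ.eq_zero_of_not_adj hxy] at h
  omega

theorem add_dart (hσ : IsState (uniformCap G c) σ) (d : G.Dart) :
    σ d.fst d.snd + σ d.snd d.fst = c := by
  simpa [uniformCap, d.adj] using hσ d.fst d.snd

theorem le_dart (hσ : IsState (uniformCap G c) σ) (d : G.Dart) : σ d.fst d.snd ≤ c := by
  have := hσ.add_dart d
  omega

theorem ext_of_orientation (o : G.edgeSet → G.Dart) (ho : ∀ e, (o e).edge = e)
    (hσ : IsState (uniformCap G c) σ) (hτ : IsState (uniformCap G c) τ)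
    (h : ∀ e, σ (o e).fst (o e).snd = τ (o e).fst (o e).snd) : σ = τ := by
  funext x y
  by_cases hxy : G.Adj x y
  · let d : G.Dart := ⟨(x, y), hxy⟩
    have hσd : σ x y + σ y x = c := hσ.add_dart d
    have hτd : τ x y + τ y x = c := hτ.add_dart d
    rcases (dart_edge_eq_iff _ _).1 (ho ⟨d.edge, d.edge_mem⟩) with hd | hd
    · simpa [hd] using h ⟨d.edge, d.edge_mem⟩
    · have hyx : σ y x = τ y x := by simpa [hd] using h ⟨d.edge, d.edge_mem⟩
      omega
  · rw [hσ.eq_zero_of_not_adj hxy, hτ.eq_zero_of_not_adj hxy]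

end IsState

theorem exists_isState_of_orientation (o : G.edgeSet → G.Dart) (ho : ∀ e, (o e).edge = e)
    (f : G.edgeSet → ℕ) (hf : ∀ e, f e ≤ c) :
    ∃ σ, IsState (uniformCap G c) σ ∧ ∀ e, σ (o e).fst (o e).snd = f e := by
  classical
  let g : G.Dart → ℕ := fun d =>
    if o ⟨d.edge, d.edge_mem⟩ = d then f ⟨d.edge, d.edge_mem⟩
    else c - f ⟨d.edge, d.edge_mem⟩
  refine ⟨fun x y => if h : G.Adj x y then g ⟨(x, y), h⟩ else 0, fun x y => ?_, fun e => ?_⟩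
  · by_cases hxy : G.Adj x y
    · let d : G.Dart := ⟨(x, y), hxy⟩
      have hsymm : (⟨d.symm.edge, d.symm.edge_mem⟩ : G.edgeSet) = ⟨d.edge, d.edge_mem⟩ :=
        Subtype.ext d.edge_symm
      have := hf ⟨d.edge, d.edge_mem⟩
      simp only [uniformCap, dif_pos hxy, dif_pos hxy.symm, if_pos hxy]
      change g d + g d.symm = c
      simp only [g, hsymm]
      rcases (dart_edge_eq_iff _ _).1 (ho ⟨d.edge, d.edge_mem⟩) with hd | hd
      · rw [if_pos hd, if_neg (by rw [hd]; exact d.symm_ne.symm)]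
        omega
      · rw [if_neg (by rw [hd]; exact d.symm_ne), if_pos hd]
        omega
    · simp [uniformCap, hxy, G.adj_comm y x]
  · have he : (⟨(o e).edge, (o e).edge_mem⟩ : G.edgeSet) = e := Subtype.ext (ho e)
    simp only [dif_pos (o e).adj]
    change g (o e) = f e
    simp [g, he]

theorem ncard_setOf_isState_orientation_mem [Fintype G.edgeSet] (o : G.edgeSet → G.Dart)
    (ho : ∀ e, (o e).edge = e) (A : G.edgeSet → Finset ℕ) (hA : ∀ e, ∀ n ∈ A e, n ≤ c) :
    {σ | IsState (uniformCap G c) σ ∧ ∀ e, σ (o e).fst (o e).snd ∈ A e}.ncard =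
      ∏ e, #(A e) := by
  classical
  rw [← Fintype.card_piFinset, ← Set.ncard_coe_finset]
  refine Set.ncard_congr (fun σ _ e => σ (o e).fst (o e).snd) (fun σ hσ => ?_)
    (fun σ τ hσ hτ h => hσ.1.ext_of_orientation o ho hτ.1 (congrFun h)) (fun f hf => ?_)
  · simpa [Fintype.mem_piFinset] using hσ.2
  · rw [Finset.mem_coe, Fintype.mem_piFinset] at hf
    obtain ⟨σ, hσ, hσf⟩ := exists_isState_of_orientation o ho f fun e => hA e _ (hf e)
    exact ⟨σ, ⟨hσ, fun e => hσf e ▸ hf e⟩, funext hσf⟩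

theorem ncard_setOf_isState_forall_darts [Fintype G.edgeSet] (D : List G.Dart)
    (hD : (D.map Dart.edge).Nodup) :
    {σ | IsState (uniformCap G c) σ ∧ ∀ d ∈ D, 1 ≤ σ d.snd d.fst}.ncard =
      c ^ D.length * (c + 1) ^ (#G.edgeFinset - D.length) := by
  classical
  obtain ⟨o, ho, hoD⟩ := exists_orientation_reversing D hD
  set E := (D.map Dart.edge).toFinset
  have hE : #E = D.length := by simp [E, List.toFinset_card_of_nodup hD]
  have hEsub : E ⊆ G.edgeFinset := by
    intro e he
    obtain ⟨d, -, rfl⟩ := List.mem_map.1 (List.mem_toFinset.1 he)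
    exact G.mem_edgeFinset.2 d.edge_mem
  let A : G.edgeSet → Finset ℕ := fun e => if e.1 ∈ E then Icc 1 c else range (c + 1)
  have hset : {σ | IsState (uniformCap G c) σ ∧ ∀ d ∈ D, 1 ≤ σ d.snd d.fst} =
      {σ | IsState (uniformCap G c) σ ∧ ∀ e, σ (o e).fst (o e).snd ∈ A e} := by
    ext σ
    refine and_congr_right fun hσ => ⟨fun h e => ?_, fun h d hd => ?_⟩
    · by_cases he : e.1 ∈ E
      · obtain ⟨d, hd, hde⟩ := List.mem_map.1 (List.mem_toFinset.1 he)
        obtain rfl : (⟨d.edge, d.edge_mem⟩ : G.edgeSet) = e := Subtype.ext hde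
        simpa [A, he, hoD d hd] using ⟨h d hd, hσ.le_dart d.symm⟩
      · simpa [A, he, Nat.lt_succ_iff] using hσ.le_dart (o e)
    · have hdE : d.edge ∈ E := List.mem_toFinset.2 (List.mem_map_of_mem hd)
      have := h ⟨d.edge, d.edge_mem⟩
      simp only [A, if_pos hdE, hoD d hd, Finset.mem_Icc] at this
      exact this.1
  have hA (e : G.edgeSet) : ∀ n ∈ A e, n ≤ c := by
    by_cases he : e.1 ∈ E <;> simp [A, he]
  have hcard (e : G.edgeSet) : #(A e) = if e.1 ∈ E then c else c + 1 := by
    by_cases he : e.1 ∈ E <;> simp [A, he]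
  rw [hset, ncard_setOf_isState_orientation_mem o ho A hA, Fintype.prod_congr _ _ hcard,
    ← Finset.prod_subtype G.edgeFinset (f := fun e => if e ∈ E then c else c + 1)
      (fun e => G.mem_edgeFinset), Finset.prod_ite, Finset.filter_mem_eq_inter,
    Finset.inter_eq_right.2 hEsub, Finset.filter_notMem_eq_sdiff, Finset.prod_const,
    Finset.prod_const, Finset.card_sdiff_of_subset hEsub, hE]

end Counting

theorem stmt9_general {V : Type*} [Fintype V]
    (T : SimpleGraph V) [DecidableRel T.Adj]
    (hconn : T.Connected) (hacyc : T.IsAcyclic)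
    (c : ℕ) (s t : V) (hst : s ≠ t) :
    {σ : V → V → ℕ |
        IsState (fun u v => if T.Adj u v then c else 0) σ ∧ Feasible σ s t}.ncard =
      c ^ (T.dist s t) * (c + 1) ^ (T.edgeFinset.card - T.dist s t) ∧
    {σ : V → V → ℕ | IsState (fun u v => if T.Adj u v then c else 0) σ}.ncard =
      (c + 1) ^ T.edgeFinset.card := by
  show {σ | IsState (uniformCap T c) σ ∧ _}.ncard = _ ∧
    {σ | IsState (uniformCap T c) σ}.ncard = _
  obtain ⟨p, hp, hlen⟩ := hconn.exists_path_of_dist s t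
  have hfeasible : {σ | IsState (uniformCap T c) σ ∧ Feasible σ s t} =
      {σ | IsState (uniformCap T c) σ ∧ ∀ d ∈ p.darts, 1 ≤ σ d.snd d.fst} :=
    Set.ext fun σ => and_congr_right fun hσ =>
      hacyc.feasible_iff (fun _ _ => hσ.adj_of_pos) hst hp
  constructor
  · rw [hfeasible, ncard_setOf_isState_forall_darts p.darts hp.isTrail.edges_nodup,
      p.length_darts, hlen]
  · simpa using ncard_setOf_isState_forall_darts (G := T) (c := c) [] List.nodup_nil

/-- Transaction feasibility count in trees: in the credit network on a tree `T` with each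
edge of total capacity `c`, the number of states in which the unit transaction `(s,t)` is
feasible is `c^l * (c+1)^(m-l)` where `l` is the tree-distance from `s` to `t` and `m` is
the number of edges; the total number of states is `(c+1)^m`. -/
theorem stmt9 {V : Type*} [Fintype V] [DecidableEq V]
    (T : SimpleGraph V) [DecidableRel T.Adj]
    (hconn : T.Connected) (hacyc : T.IsAcyclic)
    (c : ℕ) (hc : 1 ≤ c) (s t : V) (hst : s ≠ t) :
    {σ : V → V → ℕ |
        IsState (fun u v => if T.Adj u v then c else 0) σ ∧ Feasible σ s t}.ncard =
      c ^ (T.dist s t) * (c + 1) ^ (T.edgeFinset.card - T.dist s t) ∧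
    {σ : V → V → ℕ | IsState (fun u v => if T.Adj u v then c else 0) σ}.ncard =
      (c + 1) ^ T.edgeFinset.card :=
  stmt9_general T hconn hacyc c s t hst
end

section
/- Number of equivalence classes of the cycle network: let m ≥ 3 and c ≥ 1 be integers, and consider the cycle credit network on V = ZMod m with cap i j = c if j = i + 1 or i = j + 1, and cap i j = 0 otherwise. Then the number of distinct score vectors attained by states of this network, |{score σ | σ is a state}|, equals (c+1)^m − c^m. -/
open Finset

section Aux

variable {m : ℕ} [NeZero m]

lemma aux_two_ne_zero (hm : 3 ≤ m) : (2 : ZMod m) ≠ 0 := by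
  intro h
  have h2 : ((2 : ℕ) : ZMod m) = 0 := by exact_mod_cast h
  have := (ZMod.natCast_eq_zero_iff 2 m).mp h2
  have := Nat.le_of_dvd (by norm_num) this
  omega

lemma aux_one_ne_zero (hm : 3 ≤ m) : (1 : ZMod m) ≠ 0 := by
  intro h
  have h1 : ((1 : ℕ) : ZMod m) = 0 := by exact_mod_cast h
  have := (ZMod.natCast_eq_zero_iff 1 m).mp h1
  have := Nat.le_of_dvd (by norm_num) this
  omega

lemma aux_adj_ne (hm : 3 ≤ m) (i : ZMod m) : i + 1 ≠ i - 1 := by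
  intro h
  apply aux_two_ne_zero hm
  have : (2 : ZMod m) = (i + 1) - (i - 1) := by ring
  rw [this, h]; ring

lemma aux_succ_ne (hm : 3 ≤ m) (i : ZMod m) : i + 1 ≠ i := by
  intro h
  apply aux_one_ne_zero hm
  have : (1 : ZMod m) = (i + 1) - i := by ring
  rw [this, h]; ring

lemma score_eq_pair (hm : 3 ≤ m) (σ : ZMod m → ZMod m → ℕ) (i : ZMod m)
    (h0 : ∀ u, u ≠ i + 1 → u ≠ i - 1 → σ i u = 0) :
    score σ i = σ i (i + 1) + σ i (i - 1) := by
  have hne : i + 1 ≠ i - 1 := aux_adj_ne hm i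
  rw [score, ← Finset.sum_subset (Finset.subset_univ {i + 1, i - 1})
      (fun x _ hx => h0 x (fun h => hx (by simp [h])) (fun h => hx (by simp [h]))),
    Finset.sum_pair hne]

end Aux

/-- The number of cycle-reachability equivalence classes (equivalently, distinct score
vectors) of the cycle credit network on `m ≥ 3` vertices with each edge of total capacity
`c ≥ 1` is `(c+1)^m − c^m`. -/
theorem stmt10 (m c : ℕ) [NeZero m] (hm : 3 ≤ m) (hc : 1 ≤ c) :
    {d : ZMod m → ℕ | ∃ σ : ZMod m → ZMod m → ℕ,
        IsState (fun i j => if j = i + 1 ∨ i = j + 1 then c else 0) σ ∧ score σ = d}.ncard =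
      (c + 1) ^ m - c ^ m := by
  set f : (ZMod m → ℕ) → (ZMod m → ℕ) := fun a i => a i + (c - a (i - 1)) with hf
  set A₀ : Set (ZMod m → ℕ) := {a | (∀ i, a i ≤ c) ∧ ∃ i, a i = 0} with hA₀
  have h2 : (2 : ZMod m) ≠ 0 := aux_two_ne_zero hm
  have hsub1 : ∀ i : ZMod m, (i - 1) + 1 = i := fun i => by ring
  have hswap : ∀ i u : ZMod m, i = u + 1 ↔ u = i - 1 := by
    intro i u
    constructor
    · intro h; rw [h]; ring
    · intro h; rw [h]; ring
  -- Step A: the score set equals f '' A₀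
  have hSA : {d : ZMod m → ℕ | ∃ σ : ZMod m → ZMod m → ℕ,
      IsState (fun i j => if j = i + 1 ∨ i = j + 1 then c else 0) σ ∧ score σ = d} = f '' A₀ := by
    ext d
    constructor
    · rintro ⟨σ, hσ, rfl⟩
      set a : ZMod m → ℕ := fun i => σ i (i + 1) with ha
      have hac : ∀ i, a i ≤ c := by
        intro i
        have h := hσ i (i + 1)
        beta_reduce at h
        rw [if_pos (Or.inl rfl)] at h
        show σ i (i + 1) ≤ c
        omega
      have hback : ∀ i, σ i (i - 1) = c - a (i - 1) := by
        intro i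
        have h := hσ (i - 1) i
        beta_reduce at h
        rw [if_pos (Or.inl (hsub1 i).symm)] at h
        have ha' : a (i - 1) = σ (i - 1) i := by
          show σ (i - 1) (i - 1 + 1) = σ (i - 1) i
          rw [hsub1 i]
        omega
      have hzero : ∀ u v : ZMod m, ¬(v = u + 1 ∨ u = v + 1) → σ u v = 0 := by
        intro u v h
        have h' := hσ u v
        beta_reduce at h'
        rw [if_neg h] at h'
        omega
      have hscore : ∀ i, score σ i = a i + (c - a (i - 1)) := by
        intro i
        rw [score_eq_pair hm σ i (fun u hu1 hu2 => hzero i u (by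
          rintro (h | h)
          · exact hu1 h
          · exact hu2 ((hswap i u).mp h))), hback i]
      obtain ⟨i₀, _, hi₀⟩ := Finset.exists_min_image Finset.univ a ⟨0, Finset.mem_univ 0⟩
      refine ⟨fun i => a i - a i₀,
        ⟨fun i => by show a i - a i₀ ≤ c; have := hac i; omega,
          ⟨i₀, by show a i₀ - a i₀ = 0; omega⟩⟩, ?_⟩
      funext i
      have b1 := hac i
      have b2 := hac (i - 1)
      have b3 := hi₀ i (Finset.mem_univ i)
      have b4 := hi₀ (i - 1) (Finset.mem_univ (i - 1))
      show a i - a i₀ + (c - (a (i - 1) - a i₀)) = score σ i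
      rw [hscore i]
      omega
    · rintro ⟨a, ⟨hac, -⟩, rfl⟩
      set σ : ZMod m → ZMod m → ℕ :=
        fun u v => if v = u + 1 then a u else if u = v + 1 then c - a v else 0 with hσd
      refine ⟨σ, ?_, ?_⟩
      · intro u v
        by_cases hv : v = u + 1 <;> by_cases hu : u = v + 1
        · exfalso
          rw [hv] at hu
          have hu2 : u = u + 2 := by
            calc u = u + 1 + 1 := hu
            _ = u + 2 := by ring
          exact h2 (left_eq_add.mp hu2)
        · simp only [hσd, if_pos hv, if_neg hu, if_pos (Or.inl hv)]
          have := hac u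
          omega
        · simp only [hσd, if_neg hv, if_pos hu, if_pos (Or.inr hu)]
          have := hac v
          omega
        · have hcond : ¬(v = u + 1 ∨ u = v + 1) := by
            rintro (h | h)
            exacts [hv h, hu h]
          simp only [hσd, if_neg hv, if_neg hu, if_neg hcond]
      · funext i
        have hz : ∀ u, u ≠ i + 1 → u ≠ i - 1 → σ i u = 0 := by
          intro u hu1 hu2
          simp only [hσd, if_neg hu1, if_neg (fun h => hu2 ((hswap i u).mp h))]
        rw [score_eq_pair hm σ i hz]
        have e1 : σ i (i + 1) = a i := by simp [hσd]
        have hne2 : (i - 1 : ZMod m) ≠ i + 1 := fun h => aux_adj_ne hm i h.symm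
        have e2 : σ i (i - 1) = c - a (i - 1) := by
          simp only [hσd, if_neg hne2, if_pos (hsub1 i).symm]
        rw [e1, e2]
  -- Step B: injectivity of f on A₀
  have hinj : Set.InjOn f A₀ := by
    rintro a ⟨ha, i₀, hi₀⟩ a' ⟨ha', i₁, hi₁⟩ hfe
    have key : ∀ i : ZMod m, a i + a' (i - 1) = a' i + a (i - 1) := by
      intro i
      have := congrFun hfe i
      simp only [hf] at this
      have := ha i; have := ha (i - 1); have := ha' i; have := ha' (i - 1)
      omega
    have chain : ∀ k : ℕ, a (k : ZMod m) + a' 0 = a' (k : ZMod m) + a 0 := by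
      intro k
      induction k with
      | zero => simp; omega
      | succ n ih =>
        have hk := key ((n + 1 : ℕ) : ZMod m)
        push_cast at hk
        rw [add_sub_cancel_right] at hk
        push_cast
        omega
    have hall : ∀ i : ZMod m, a i + a' 0 = a' i + a 0 := by
      intro i
      obtain ⟨k, rfl⟩ := ZMod.natCast_zmod_surjective i
      exact chain k
    have e0 : a 0 = a' 0 := by
      have h₀ := hall i₀
      have h₁ := hall i₁
      omega
    funext i
    have := hall i
    omega
  rw [hSA, Set.ncard_image_of_injOn hinj]
  -- Step C: counting A₀
  have hset : A₀ = ↑(Fintype.piFinset (fun _ : ZMod m => Finset.range (c + 1)) \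
      Fintype.piFinset (fun _ : ZMod m => Finset.Icc 1 c)) := by
    ext a
    simp only [hA₀, Set.mem_setOf_eq, Finset.coe_sdiff, Set.mem_diff, Finset.mem_coe,
      Fintype.mem_piFinset, Finset.mem_range, Finset.mem_Icc]
    constructor
    · rintro ⟨hb, i, hi⟩
      exact ⟨fun j => by have := hb j; omega, fun hall => by have := hall i; omega⟩
    · rintro ⟨hb, hne⟩
      refine ⟨fun j => by have := hb j; omega, ?_⟩
      by_contra h
      push_neg at h
      exact hne fun i => ⟨by have := h i; omega, by have := hb i; omega⟩
  rw [hset, Set.ncard_coe_finset,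
    Finset.card_sdiff_of_subset (fun x hx => by
      simp only [Fintype.mem_piFinset, Finset.mem_range, Finset.mem_Icc] at *
      intro i; have := hx i; omega)]
  simp [Fintype.card_piFinset, ZMod.card]
end

section
/- Asymptotic order of the success probability in cycles under uniform transaction rates: for integers n ≥ 2 and c ≥ 1 set r = c/(c+1) and define p(n,c) = (1/(n−1)) · ∑_{l=1}^{n−1} (r^l + r^{n−l} − 2r^n)/(1 − r^n). Then there exist absolute constants A, B > 0 such that for every integer c ≥ 1 there is an N with A·c/n ≤ p(n,c) ≤ B·c/n for all n ≥ N. In particular, for fixed c the steady-state success probability of the cycle network under a uniform transaction regime is Θ(c/n). -/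
/-!
With `r = c/(c+1)`, reflecting `l ↦ n - l` shows that both power sums in `p(n,c)` equal the
truncated geometric series `(r - r^n)/(1 - r)`, so
`(n - 1) p(n,c) = 2((r - r^n)/(1 - r) - (n - 1) r^n)/(1 - r^n)`.
As `r^n → 0` and `n r^n → 0`, this gives `n p(n,c) → 2r/(1 - r) = 2c`, and any constants
`A < 2 < B` work.
-/

open Filter Topology Finset

noncomputable def pcyc (n c : ℕ) : ℝ :=
  (1 / ((n : ℝ) - 1)) * ∑ l ∈ Finset.Icc 1 (n - 1),
    (((c : ℝ) / ((c : ℝ) + 1)) ^ l + ((c : ℝ) / ((c : ℝ) + 1)) ^ (n - l) -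
        2 * ((c : ℝ) / ((c : ℝ) + 1)) ^ n) /
      (1 - ((c : ℝ) / ((c : ℝ) + 1)) ^ n)

theorem Finset.sum_Icc_one_sub_reflect {M : Type*} [AddCommMonoid M] (f : ℕ → M) (n : ℕ) :
    ∑ l ∈ Icc 1 (n - 1), f (n - l) = ∑ l ∈ Icc 1 (n - 1), f l := by
  have h : ∀ l ∈ Icc 1 (n - 1), n - l ∈ Icc 1 (n - 1) ∧ n - (n - l) = l := fun l hl ↦ by
    simp only [mem_Icc] at hl ⊢; omega
  exact sum_nbij' (n - ·) (n - ·) (fun l hl ↦ (h l hl).1) (fun l hl ↦ (h l hl).1)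
    (fun l hl ↦ (h l hl).2) (fun l hl ↦ (h l hl).2) fun _ _ ↦ rfl

theorem geom_sum_Icc_one {K : Type*} [DivisionRing K] {r : K} (hr : r ≠ 1) {n : ℕ}
    (hn : 1 ≤ n) : ∑ l ∈ Icc 1 (n - 1), r ^ l = (r - r ^ n) / (1 - r) := by
  have hmin : ¬IsMin n := by simp only [isMin_iff_eq_bot, Nat.bot_eq_zero]; omega
  rw [Icc_sub_one_right_eq_Ico_of_not_isMin hmin, geom_sum_Ico' hr hn, pow_one]

noncomputable def cycleSuccessProb (r : ℝ) (n : ℕ) : ℝ :=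
  (1 / ((n : ℝ) - 1)) * ∑ l ∈ Icc 1 (n - 1), (r ^ l + r ^ (n - l) - 2 * r ^ n) / (1 - r ^ n)

theorem pcyc_eq_cycleSuccessProb (n c : ℕ) :
    pcyc n c = cycleSuccessProb ((c : ℝ) / (c + 1)) n := rfl

theorem sub_one_mul_cycleSuccessProb {r : ℝ} (hr : r ≠ 1) {n : ℕ} (hn : 2 ≤ n) :
    ((n : ℝ) - 1) * cycleSuccessProb r n
      = 2 * ((r - r ^ n) / (1 - r) - ((n : ℝ) - 1) * r ^ n) / (1 - r ^ n) := by
  have hn1 : (n : ℝ) - 1 ≠ 0 := by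
    rw [sub_ne_zero, Nat.cast_ne_one]; omega
  rw [cycleSuccessProb, ← mul_assoc, mul_one_div_cancel hn1, one_mul, ← sum_div,
    sum_sub_distrib, sum_add_distrib, sum_Icc_one_sub_reflect (r ^ ·),
    geom_sum_Icc_one hr (by omega), sum_const, Nat.card_Icc, nsmul_eq_mul,
    Nat.add_sub_cancel, Nat.cast_sub (by omega : 1 ≤ n)]
  ring_nf

theorem tendsto_sub_one_mul_cycleSuccessProb {r : ℝ} (hr : |r| < 1) :
    Tendsto (fun n : ℕ ↦ ((n : ℝ) - 1) * cycleSuccessProb r n) atTop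
      (𝓝 (2 * (r / (1 - r)))) := by
  have hr1 : r ≠ 1 := fun h ↦ by simp [h] at hr
  have hpow := tendsto_pow_atTop_nhds_zero_of_abs_lt_one hr
  have hmul : Tendsto (fun n : ℕ ↦ ((n : ℝ) - 1) * r ^ n) atTop (𝓝 0) := by
    simpa [sub_mul] using (tendsto_self_mul_const_pow_of_abs_lt_one hr).sub hpow
  have hlim : Tendsto
      (fun n : ℕ ↦ 2 * ((r - r ^ n) / (1 - r) - ((n : ℝ) - 1) * r ^ n) / (1 - r ^ n)) atTop
      (𝓝 (2 * ((r - 0) / (1 - r) - 0) / (1 - 0))) :=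
    ((((tendsto_const_nhds.sub hpow).div_const _).sub hmul).const_mul 2).div
      (tendsto_const_nhds.sub hpow) (by norm_num)
  simp only [sub_zero, div_one] at hlim
  exact hlim.congr' <| (eventually_ge_atTop 2).mono fun n hn ↦
    (sub_one_mul_cycleSuccessProb hr1 hn).symm

theorem tendsto_natCast_mul_cycleSuccessProb {r : ℝ} (hr : |r| < 1) :
    Tendsto (fun n : ℕ ↦ (n : ℝ) * cycleSuccessProb r n) atTop (𝓝 (2 * (r / (1 - r)))) := by
  have h := (tendsto_natCast_div_add_atTop (-1 : ℝ)).mul (tendsto_sub_one_mul_cycleSuccessProb hr)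
  rw [one_mul] at h
  refine h.congr' <| (eventually_ge_atTop 2).mono fun n hn ↦ ?_
  have hn1 : (n : ℝ) - 1 ≠ 0 := by
    rw [sub_ne_zero, Nat.cast_ne_one]; omega
  rw [← sub_eq_add_neg, ← mul_assoc, div_mul_cancel₀ _ hn1]

theorem tendsto_natCast_mul_pcyc (c : ℕ) :
    Tendsto (fun n : ℕ ↦ (n : ℝ) * pcyc n c) atTop (𝓝 (2 * c)) := by
  have hr : |(c : ℝ) / (c + 1)| < 1 := by
    rw [abs_of_nonneg (by positivity), div_lt_one (by positivity)]; linarith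
  have hrc : (c : ℝ) / (c + 1) / (1 - c / (c + 1)) = c := by
    field_simp; ring
  simpa only [pcyc_eq_cycleSuccessProb, hrc] using tendsto_natCast_mul_cycleSuccessProb hr

/-- The steady-state success probability of the cycle network under a uniform transaction
regime is `Θ(c/n)`: there are absolute constants `A, B > 0` such that for every `c ≥ 1`
there is an `N` with `A·c/n ≤ p(n,c) ≤ B·c/n` for all `n ≥ N`. -/
theorem stmt12 :
    ∃ A B : ℝ, 0 < A ∧ 0 < B ∧
      ∀ c : ℕ, 1 ≤ c → ∃ N : ℕ, ∀ n : ℕ, N ≤ n →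
        A * (c : ℝ) / (n : ℝ) ≤ pcyc n c ∧ pcyc n c ≤ B * (c : ℝ) / (n : ℝ) := by
  refine ⟨1, 3, one_pos, three_pos, fun c hc ↦ ?_⟩
  have hc0 : (0 : ℝ) < c := by exact_mod_cast hc
  have hmem : ∀ᶠ n : ℕ in atTop, (n : ℝ) * pcyc n c ∈ Set.Ioo (1 * (c : ℝ)) (3 * c) :=
    tendsto_natCast_mul_pcyc c |>.eventually (Ioo_mem_nhds (by linarith) (by linarith))
  obtain ⟨N, hN⟩ := eventually_atTop.mp (hmem.and (eventually_gt_atTop 0))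
  refine ⟨N, fun n hn ↦ ?_⟩
  obtain ⟨⟨hlo, hhi⟩, hn0⟩ := hN n hn
  have hn0' : (0 : ℝ) < n := by exact_mod_cast hn0
  constructor
  · rw [div_le_iff₀' hn0']; exact hlo.le
  · rw [le_div_iff₀' hn0']; exact hhi.le
end

section
/- Lower bound on forests of the complete multigraph: for integers n ≥ 2 and c ≥ 1, the number a_{n,c} of forests of the complete multigraph K_{n;c} satisfies a_{n,c} ≥ c^{n−1} · n^{n−2}. -/
/-- `numForests n c` is `a_{n,c}`, the number of forests of the complete multigraph
`K_{n;c}` whose edge indices are pairs of a non-diagonal unordered pair of vertices in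
`Fin n` and a copy index in `Fin c`. -/
noncomputable def numForests (n c : ℕ) : ℕ :=
  {F : Finset ({ p : Sym2 (Fin n) // ¬ p.IsDiag } × Fin c) |
    IsForest (fun e => (e.1 : Sym2 (Fin n))) F}.ncard

/-!
Prüfer decoding turns every sequence `f : Fin (n - 2) → Fin n` into a spanning tree of `Kₙ`,
and different sequences give different trees: in the tree decoded from `f` a vertex has degree
one more than its multiplicity in `f`, so the tree determines the first leaf removed, the first
edge, and, inductively, the whole sequence. Choosing one of the `c` parallel copies for each of
the `n - 1` edges then injects `(Fin (n - 2) → Fin n) × (Fin (n - 1) → Fin c)` into the forests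
of `K_{n;c}`.
-/

/-- Only cycles of length at least three: a set of edges has no parallel edges, and
`IsForest.of_injOn` excludes those of a multigraph through injectivity of `ε`. -/
def IsCycleFree {V : Type*} (E : Set (Sym2 V)) : Prop :=
  ∀ (k : ℕ) (v : Fin (k + 3) → V), Function.Injective v → ∃ i, s(v i, v (i + 1)) ∉ E

theorem IsCycleFree.mono {V : Type*} {E E' : Set (Sym2 V)} (h : E ⊆ E') (hE' : IsCycleFree E') :
    IsCycleFree E := fun k v hv => (hE' k v hv).imp fun _ hi hE => hi (h hE)

theorem IsForest.of_injOn {V ι : Type*} {ε : ι → Sym2 V} {F : Finset ι}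
    (hinj : Set.InjOn ε F) (hcyc : IsCycleFree (ε '' F)) : IsForest ε F := by
  rintro ⟨k, v, e, hv, he, hF, hε⟩
  cases k with
  | zero =>
    have h01 : ε (e 0) = ε (e 1) := by rw [hε 0, hε 1, Sym2.eq_swap]; rfl
    exact absurd (he (hinj (hF 0) (hF 1) h01)) (by decide)
  | succ k =>
    obtain ⟨i, hi⟩ := hcyc k v hv
    exact hi ⟨e i, hF i, hε i⟩

theorem injective_sym2_mk_cycle {V : Type*} {k : ℕ} {v : Fin (k + 3) → V}
    (hv : Function.Injective v) : Function.Injective fun i => s(v i, v (i + 1)) := by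
  intro i j hij
  rcases Sym2.eq_iff.mp hij with ⟨h, -⟩ | ⟨h₁, h₂⟩
  · exact hv h
  · have h₁ := hv h₁
    have h₂ := hv h₂
    subst h₁
    rw [add_assoc, add_eq_left, Fin.ext_iff, Fin.val_add] at h₂
    simp [Nat.mod_eq_of_lt] at h₂

namespace Prufer

variable {V : Type*} [LinearOrder V]

/-- The least vertex of `s` outside `a :: l`; the default `a` is never reached on admissible
data. -/
def leaf (a : V) (l : List V) (s : Finset V) : V :=
  if h : (s \ (a :: l).toFinset).Nonempty then (s \ (a :: l).toFinset).min' h else a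

/-- `decode (l ++ [r]) s` is the tree on `s` with Prüfer sequence `l` in which `r` is the last
vertex to survive (classically, the largest one). -/
def decode : List V → Finset V → List (Sym2 V)
  | [], _ => []
  | a :: l, s => s(leaf a l s, a) :: decode l (s.erase (leaf a l s))

structure Admissible (l : List V) (s : Finset V) : Prop where
  card_eq : s.card = l.length + 1
  mem : ∀ x ∈ l, x ∈ s

variable {a r x : V} {l l₁ l₂ : List V} {s : Finset V} {e : Sym2 V}

theorem leaf_le (hx : x ∈ s) (hxl : x ∉ a :: l) : leaf a l s ≤ x := by
  have hmem : x ∈ s \ (a :: l).toFinset := by simp_all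
  rw [leaf, dif_pos ⟨x, hmem⟩]
  exact Finset.min'_le _ _ hmem

theorem length_decode : (decode l s).length = l.length := by
  induction l generalizing s with
  | nil => rfl
  | cons a l ih => simp [decode, ih]

namespace Admissible

theorem leaf_mem_sdiff (h : Admissible (a :: l) s) : leaf a l s ∈ s \ (a :: l).toFinset := by
  have hne : (s \ (a :: l).toFinset).Nonempty := by
    apply Finset.sdiff_nonempty_of_card_lt_card
    have := (a :: l).toFinset_card_le
    have := h.card_eq
    simp only [List.length_cons] at *
    omega
  rw [leaf, dif_pos hne]
  exact Finset.min'_mem _ hne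

theorem leaf_mem (h : Admissible (a :: l) s) : leaf a l s ∈ s :=
  (Finset.mem_sdiff.1 h.leaf_mem_sdiff).1

theorem leaf_notMem (h : Admissible (a :: l) s) : leaf a l s ∉ a :: l := by
  simpa using (Finset.mem_sdiff.1 h.leaf_mem_sdiff).2

theorem erase_leaf (h : Admissible (a :: l) s) : Admissible l (s.erase (leaf a l s)) where
  card_eq := by rw [Finset.card_erase_of_mem h.leaf_mem, h.card_eq]; rfl
  mem x hx := Finset.mem_erase.2
    ⟨fun hxu => h.leaf_notMem (hxu ▸ List.mem_cons_of_mem a hx),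
      h.mem x (List.mem_cons_of_mem a hx)⟩

theorem mem_of_mem_decode (h : Admissible l s) (he : e ∈ decode l s) (hx : x ∈ e) :
    x ∈ s := by
  induction l generalizing s with
  | nil => simp [decode] at he
  | cons a l ih =>
    rcases List.mem_cons.1 he with rfl | he
    · rcases Sym2.mem_iff.1 hx with hx | hx <;> rw [hx]
      exacts [h.leaf_mem, h.mem _ List.mem_cons_self]
    · exact Finset.mem_of_mem_erase (ih h.erase_leaf he)

theorem leaf_notMem_of_mem_decode (h : Admissible (a :: l) s)
    (he : e ∈ decode l (s.erase (leaf a l s))) : leaf a l s ∉ e := fun hu =>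
  Finset.notMem_erase _ _ (h.erase_leaf.mem_of_mem_decode he hu)

theorem not_isDiag_of_mem_decode (h : Admissible l s) (he : e ∈ decode l s) : ¬ e.IsDiag := by
  induction l generalizing s with
  | nil => simp [decode] at he
  | cons a l ih =>
    rcases List.mem_cons.1 he with rfl | he
    · rw [Sym2.mk_isDiag_iff]
      exact fun hua => h.leaf_notMem (by rw [hua]; exact List.mem_cons_self)
    · exact ih h.erase_leaf he

theorem nodup_decode (h : Admissible l s) : (decode l s).Nodup := by
  induction l generalizing s with
  | nil => exact List.nodup_nil
  | cons a l ih =>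
    refine List.Nodup.cons (fun he => ?_) (ih h.erase_leaf)
    exact h.leaf_notMem_of_mem_decode he (Sym2.mem_mk_left _ _)

theorem eq_of_mem_decode_of_leaf_mem (h : Admissible (a :: l) s) (he : e ∈ decode (a :: l) s)
    (hu : leaf a l s ∈ e) : e = s(leaf a l s, a) :=
  (List.mem_cons.1 he).resolve_right fun he => h.leaf_notMem_of_mem_decode he hu

theorem isCycleFree_decode (h : Admissible l s) : IsCycleFree {e | e ∈ decode l s} := by
  induction l generalizing s with
  | nil => exact fun _ _ _ => ⟨0, by simp [decode]⟩
  | cons a l ih =>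
    intro k v hv
    by_cases hu : ∃ j, v j = leaf a l s
    · obtain ⟨j, hj⟩ := hu
      by_contra! hcyc
      have hout : s(v j, v (j + 1)) = s(leaf a l s, a) :=
        h.eq_of_mem_decode_of_leaf_mem (hcyc j) (hj ▸ Sym2.mem_mk_left _ _)
      have hin : s(v (j - 1), v (j - 1 + 1)) = s(leaf a l s, a) :=
        h.eq_of_mem_decode_of_leaf_mem (hcyc (j - 1)) (by simp [hj])
      have := injective_sym2_mk_cycle hv (hin.trans hout.symm)
      simp at this
    · push Not at hu
      obtain ⟨i, hi⟩ := ih h.erase_leaf k v hv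
      refine ⟨i, fun hmem => (List.mem_cons.1 hmem).elim (fun hhead => ?_) hi⟩
      have : leaf a l s ∈ s(v i, v (i + 1)) := hhead ▸ Sym2.mem_mk_left _ _
      rcases Sym2.mem_iff.1 this with h' | h'
      exacts [hu i h'.symm, hu (i + 1) h'.symm]

theorem countP_mem_decode (h : Admissible (l ++ [r]) s) (hx : x ∈ s) :
    (decode (l ++ [r]) s).countP (fun e => x ∈ e) = l.count x + 1 := by
  induction l generalizing s with
  | nil =>
    have hr : r ∈ s.erase (leaf r [] s) := by
      refine Finset.mem_erase.2 ⟨fun hru => h.leaf_notMem ?_, h.mem r (by simp)⟩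
      rw [← hru]
      exact List.mem_singleton_self r
    have hxr : x = leaf r [] s ∨ x = r := by
      refine or_iff_not_imp_left.2 fun hxu => ?_
      have hcard := h.erase_leaf.card_eq
      exact Finset.card_le_one.1 hcard.le x (Finset.mem_erase.2 ⟨hxu, hx⟩) r hr
    rcases hxr with rfl | rfl <;> simp [decode]
  | cons a l ih =>
    rw [List.cons_append] at h ⊢
    simp only [decode, List.countP_cons]
    by_cases hxu : x = leaf a (l ++ [r]) s
    · subst hxu
      have hrest : (decode (l ++ [r]) (s.erase (leaf a (l ++ [r]) s))).countP
          (fun e => leaf a (l ++ [r]) s ∈ e) = 0 :=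
        List.countP_eq_zero.2 fun e he => by simpa using h.leaf_notMem_of_mem_decode he
      have hcount : (a :: l).count (leaf a (l ++ [r]) s) = 0 :=
        List.count_eq_zero.2 fun hmem =>
          h.leaf_notMem (List.cons_subset_cons a (List.subset_append_left l [r]) hmem)
      simp [hrest, hcount]
    · rw [ih h.erase_leaf (Finset.mem_erase.2 ⟨hxu, hx⟩)]
      by_cases hxa : x = a
      · subst hxa; simp
      · simp [Sym2.mem_iff, hxu, hxa, Ne.symm hxa]

theorem mem_iff_of_perm_decode (h : Admissible (l₁ ++ [r]) s) (h' : Admissible (l₂ ++ [r]) s)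
    (hp : (decode (l₁ ++ [r]) s).Perm (decode (l₂ ++ [r]) s)) (hx : x ∈ s) :
    x ∈ l₁ ++ [r] ↔ x ∈ l₂ ++ [r] := by
  have hcount : l₁.count x = l₂.count x := by
    have := hp.countP_eq (fun e => x ∈ e)
    rwa [h.countP_mem_decode hx, h'.countP_mem_decode hx, Nat.add_right_cancel_iff] at this
  rw [← List.count_pos_iff, ← List.count_pos_iff, List.count_append, List.count_append, hcount]

end Admissible

theorem eq_of_perm_decode (h₁ : Admissible (l₁ ++ [r]) s) (h₂ : Admissible (l₂ ++ [r]) s)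
    (hp : (decode (l₁ ++ [r]) s).Perm (decode (l₂ ++ [r]) s)) : l₁ = l₂ := by
  induction l₁ generalizing l₂ s with
  | nil =>
    have := h₁.card_eq.symm.trans h₂.card_eq
    simp_all
  | cons a₁ l₁ ih =>
    obtain _ | ⟨a₂, l₂⟩ := l₂
    · have := h₁.card_eq.symm.trans h₂.card_eq
      simp_all
    have hmem : ∀ x ∈ s, x ∉ a₁ :: (l₁ ++ [r]) ↔ x ∉ a₂ :: (l₂ ++ [r]) :=
      fun x hx => not_congr (h₁.mem_iff_of_perm_decode h₂ hp hx)
    rw [List.cons_append] at h₁ h₂ hp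
    have hu : leaf a₁ (l₁ ++ [r]) s = leaf a₂ (l₂ ++ [r]) s :=
      le_antisymm (leaf_le h₂.leaf_mem ((hmem _ h₂.leaf_mem).2 h₂.leaf_notMem))
        (leaf_le h₁.leaf_mem ((hmem _ h₁.leaf_mem).1 h₁.leaf_notMem))
    have ha : a₂ = a₁ := by
      have hhead := h₁.eq_of_mem_decode_of_leaf_mem (hp.symm.subset List.mem_cons_self)
        (hu ▸ Sym2.mem_mk_left _ _)
      rw [hu] at hhead
      exact Sym2.congr_right.1 hhead
    subst ha
    simp only [List.cons_append, decode] at hp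
    rw [← hu] at hp
    have h₂' := h₂.erase_leaf
    rw [← hu] at h₂'
    rw [ih h₁.erase_leaf h₂' hp.cons_inv]

end Prufer

theorem Finset.image_pair_injective {κ α β : Type*} [Fintype κ] [DecidableEq α]
    [DecidableEq β] {t : κ → α} (ht : Function.Injective t) :
    Function.Injective fun g : κ → β => Finset.univ.image fun i => (t i, g i) := by
  intro g₁ g₂ h
  funext i
  have hi : (t i, g₁ i) ∈ Finset.univ.image fun j => (t j, g₂ j) := by
    simp only at h
    exact h ▸ Finset.mem_image_of_mem _ (Finset.mem_univ i)
  obtain ⟨j, -, hj⟩ := Finset.mem_image.1 hi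
  obtain ⟨htj, hgj⟩ := Prod.mk.inj hj
  rw [← hgj, ht htj]

section CompleteMultigraph

open Prufer

theorem admissible_ofFn_append {V : Type*} [Fintype V] {m : ℕ} (hV : Fintype.card V = m + 2)
    (r : V) (f : Fin m → V) : Admissible (List.ofFn f ++ [r]) Finset.univ :=
  ⟨by simp [hV], fun _ _ => Finset.mem_univ _⟩

variable {V : Type*} [Fintype V] [LinearOrder V] {m : ℕ}

def pruferTree (r : V) (f : Fin m → V) : List (Sym2 V) :=
  decode (List.ofFn f ++ [r]) Finset.univ

theorem length_pruferTree (r : V) (f : Fin m → V) : (pruferTree r f).length = m + 1 := by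
  simp [pruferTree, length_decode]

variable (hV : Fintype.card V = m + 2) (r : V) (c : ℕ)

def treeEdge (f : Fin m → V) (i : Fin (m + 1)) : {p : Sym2 V // ¬ p.IsDiag} :=
  ⟨(pruferTree r f)[i]'(by rw [length_pruferTree]; exact i.2),
    (admissible_ofFn_append hV r f).not_isDiag_of_mem_decode (List.getElem_mem _)⟩

theorem treeEdge_injective (f : Fin m → V) : Function.Injective (treeEdge hV r f) := by
  intro i j hij
  exact Fin.ext <|
    (admissible_ofFn_append hV r f).nodup_decode.getElem_inj_iff.1 (congrArg Subtype.val hij)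

def coloredTree (fg : (Fin m → V) × (Fin (m + 1) → Fin c)) :
    Finset ({p : Sym2 V // ¬ p.IsDiag} × Fin c) :=
  Finset.univ.image fun i => (treeEdge hV r fg.1 i, fg.2 i)

theorem image_coloredTree (fg : (Fin m → V) × (Fin (m + 1) → Fin c)) :
    (coloredTree hV r c fg).image (fun x => (x.1 : Sym2 V)) = (pruferTree r fg.1).toFinset := by
  ext e
  simp only [coloredTree, treeEdge, Finset.image_image, Finset.mem_image, Finset.mem_univ,
    true_and, Function.comp_apply, List.mem_toFinset, List.mem_iff_getElem]
  constructor
  · rintro ⟨i, rfl⟩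
    exact ⟨i, _, rfl⟩
  · rintro ⟨i, hi, rfl⟩
    exact ⟨⟨i, by rwa [length_pruferTree] at hi⟩, rfl⟩

theorem isForest_coloredTree (fg : (Fin m → V) × (Fin (m + 1) → Fin c)) :
    IsForest (fun e => (e.1 : Sym2 V)) (coloredTree hV r c fg) := by
  refine IsForest.of_injOn ?_ ((admissible_ofFn_append hV r fg.1).isCycleFree_decode.mono ?_)
  · intro x hx y hy hxy
    obtain ⟨i, -, rfl⟩ := Finset.mem_image.1 hx
    obtain ⟨j, -, rfl⟩ := Finset.mem_image.1 hy
    rw [treeEdge_injective hV r fg.1 (Subtype.ext hxy)]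
  · rintro _ ⟨x, hx, rfl⟩
    obtain ⟨i, -, rfl⟩ := Finset.mem_image.1 hx
    exact List.getElem_mem _

theorem coloredTree_injective : Function.Injective (coloredTree hV r c) := by
  rintro ⟨f₁, g₁⟩ ⟨f₂, g₂⟩ h
  have hf : f₁ = f₂ := by
    have hE := congrArg (Finset.image fun x => (x.1 : Sym2 V)) h
    simp only [image_coloredTree] at hE
    refine List.ofFn_injective (eq_of_perm_decode (admissible_ofFn_append hV r f₁)
      (admissible_ofFn_append hV r f₂) (List.perm_of_nodup_nodup_toFinset_eq ?_ ?_ hE))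
    exacts [(admissible_ofFn_append hV r f₁).nodup_decode,
      (admissible_ofFn_append hV r f₂).nodup_decode]
  subst hf
  exact congrArg _ (Finset.image_pair_injective (treeEdge_injective hV r f₁) h)

end CompleteMultigraph

theorem le_ncard_isForest {V : Type*} [Fintype V] [LinearOrder V] {m : ℕ}
    (hV : Fintype.card V = m + 2) (c : ℕ) :
    c ^ (m + 1) * (m + 2) ^ m ≤ {F : Finset ({p : Sym2 V // ¬ p.IsDiag} × Fin c) |
      IsForest (fun e => (e.1 : Sym2 V)) F}.ncard := by
  obtain ⟨r⟩ : Nonempty V := Fintype.card_pos_iff.1 (by omega)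
  calc c ^ (m + 1) * (m + 2) ^ m = Nat.card ((Fin m → V) × (Fin (m + 1) → Fin c)) := by
        simp [hV, mul_comm]
    _ = (Set.range (coloredTree hV r c)).ncard := by
        rw [← Nat.card_coe_set_eq, Nat.card_range_of_injective (coloredTree_injective hV r c)]
    _ ≤ _ := Set.ncard_le_ncard (Set.range_subset_iff.2 (isForest_coloredTree hV r c))

theorem stmt13_general (n c : ℕ) (hn : 2 ≤ n) :
    c ^ (n - 1) * n ^ (n - 2) ≤ numForests n c := by
  obtain ⟨m, rfl⟩ := Nat.exists_eq_add_of_le' hn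
  simpa [numForests] using le_ncard_isForest (Fintype.card_fin (m + 2)) c

/-- Lower bound on the number of forests of the complete multigraph:
`a_{n,c} ≥ c^(n−1) · n^(n−2)`. -/
theorem stmt13 (n c : ℕ) (hn : 2 ≤ n) (hc : 1 ≤ c) :
    c ^ (n - 1) * n ^ (n - 2) ≤ numForests n c :=
  stmt13_general n c hn
end

section
/- Upper bound on forests of the complete multigraph: for integers n ≥ 2 and c ≥ 1, the number a_{n,c} of forests of the complete multigraph K_{n;c} satisfies a_{n,c} ≤ c^{n−1} · a_{n,1}, where a_{n,1} is the number of forests of the simple complete graph K_{n;1}. -/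
/-!
Forgetting the copy index maps forests of `K_{n;c}` to forests of `K_{n;1}`. Two parallel edges
form a cycle of length two, so a forest uses each vertex pair at most once; it is therefore
determined by its image together with a choice of copy for each edge of the image. Since an
acyclic graph on `n` vertices has at most `n - 1` edges, every fibre has at most `c ^ (n - 1)`
elements.
-/

open SimpleGraph Finset

namespace SimpleGraph

variable {V : Type*} {G : SimpleGraph V}

lemma IsAcyclic.ncard_edgeSet_le [Finite V] (hG : G.IsAcyclic) :
    G.edgeSet.ncard ≤ Nat.card V - 1 := by
  cases isEmpty_or_nonempty V
  · simp [Set.eq_empty_of_isEmpty G.edgeSet]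
  obtain ⟨T, hGT, -, hT⟩ := connected_top.exists_isTree_le_of_le_of_isAcyclic le_top hG
  have hT_card : Nat.card T.edgeSet + 1 = Nat.card V := (isTree_iff_connected_and_card.mp hT).2
  calc G.edgeSet.ncard ≤ T.edgeSet.ncard := Set.ncard_le_ncard (edgeSet_mono hGT)
    _ = Nat.card V - 1 := by rw [← Nat.card_coe_set_eq]; omega

lemma Walk.getVert_val_fin_add_one {u : V} (c : G.Walk u u) {k : ℕ} (hk : c.length = k + 2)
    (i : Fin (k + 2)) : c.getVert ↑(i + 1) = c.getVert (i + 1) := by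
  rw [Fin.val_add_one]
  split_ifs with h
  · rw [h, Fin.val_last, Walk.getVert_zero, ← hk, Walk.getVert_length]
  · rfl

end SimpleGraph

section IsForest

variable {V ι κ : Type*} {ε : ι → Sym2 V} {F : Finset ι}

lemma IsForest.injOn (hF : IsForest ε F) (hloop : ∀ e ∈ F, ¬ (ε e).IsDiag) :
    Set.InjOn ε F := by
  intro e he f hf hef
  by_contra hne
  induction h : ε e using Sym2.ind with
  | h a b =>
  have hab : a ≠ b := fun h' => hloop e he (by rw [h, h']; rfl)
  refine hF ⟨0, ![a, b], ![e, f], ?_, ?_, ?_, ?_⟩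
  · intro i j; fin_cases i <;> fin_cases j <;> simp [hab, hab.symm]
  · intro i j; fin_cases i <;> fin_cases j <;> simp [hne, Ne.symm hne]
  · intro i; fin_cases i; exacts [he, hf]
  · intro i; fin_cases i
    · simpa using h
    · simpa [← hef, Sym2.eq_swap] using h

lemma IsForest.image [DecidableEq κ] {ε' : κ → Sym2 V} (g : ι → κ) (hg : ∀ e, ε' (g e) = ε e)
    (hF : IsForest ε F) : IsForest ε' (F.image g) := by
  rintro ⟨k, v, e, hv, he, hmem, hε⟩
  choose l hlF hgl using fun i => mem_image.mp (hmem i)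
  refine hF ⟨k, v, l, hv, fun i j hij => he ?_, hlF, fun i => ?_⟩
  · rw [← hgl i, ← hgl j, hij]
  · rw [← hg, hgl, hε]

lemma IsForest.isAcyclic_fromEdgeSet (hF : IsForest ε F) :
    (fromEdgeSet (ε '' F)).IsAcyclic := by
  intro u c hc
  obtain ⟨k, hk⟩ : ∃ k, c.length = k + 2 := ⟨c.length - 2, by have := hc.three_le_length; omega⟩
  set v : Fin (k + 2) → V := fun i => c.getVert i
  have hedge : ∀ i : Fin (k + 2), ∃ e ∈ F, ε e = s(v i, v (i + 1)) := by
    intro i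
    have hadj := c.adj_getVert_succ (i := i) (by omega)
    rw [← c.getVert_val_fin_add_one hk, fromEdgeSet_adj] at hadj
    exact hadj.1
  choose e heF hεe using hedge
  refine hF ⟨k, v, e, fun i j hij => Fin.ext ?_, fun i j hij => Fin.ext ?_, heF, hεe⟩
  · exact hc.getVert_injOn' (by simp; omega) (by simp; omega) hij
  · have hlen : c.edges.length = k + 2 := by rw [Walk.length_edges, hk]
    refine (hc.edges_nodup.getElem_inj_iff (hi := by omega) (hj := by omega)).mp ?_
    rw [Walk.getElem_edges, Walk.getElem_edges, ← c.getVert_val_fin_add_one hk,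
      ← c.getVert_val_fin_add_one hk]
    exact (hεe i).symm.trans ((congrArg ε hij).trans (hεe j))

lemma IsForest.card_le [Fintype V] (hF : IsForest ε F) (hloop : ∀ e ∈ F, ¬ (ε e).IsDiag) :
    #F ≤ Fintype.card V - 1 := by
  have hedges : (fromEdgeSet (ε '' F)).edgeSet = ε '' F := by
    rw [edgeSet_fromEdgeSet, sdiff_eq_left, Set.disjoint_left]
    rintro _ ⟨e, he, rfl⟩
    exact hloop e he
  calc #F = (ε '' F).ncard := by rw [(hF.injOn hloop).ncard_image, Set.ncard_coe_finset]
    _ ≤ Fintype.card V - 1 := by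
      rw [← hedges, ← Nat.card_eq_fintype_card]
      exact hF.isAcyclic_fromEdgeSet.ncard_edgeSet_le

end IsForest

lemma Finset.card_le_pow_of_injOn_fst {α β : Type*} [DecidableEq α] [DecidableEq β] [Fintype β]
    (T : Finset α) (𝓕 : Finset (Finset (α × β)))
    (h𝓕 : ∀ F ∈ 𝓕, Set.InjOn Prod.fst (F : Set (α × β)) ∧ F.image Prod.fst = T) :
    #𝓕 ≤ Fintype.card β ^ #T := by
  set graph : (T → β) → Finset (α × β) := fun f => T.attach.image fun x => (x.1, f x)
  have h𝓕_sub : 𝓕 ⊆ univ.image graph := by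
    intro F hF
    obtain ⟨hinj, hT⟩ := h𝓕 F hF
    have hex : ∀ x : T, ∃ b, (x.1, b) ∈ F := by
      intro x
      obtain ⟨p, hp, hpx⟩ := mem_image.mp (hT.symm ▸ x.2 : x.1 ∈ F.image Prod.fst)
      exact ⟨p.2, by rwa [← hpx]⟩
    choose f hf using hex
    refine mem_image.mpr ⟨f, mem_univ _, ?_⟩
    ext ⟨a, b⟩
    simp only [graph, mem_image, mem_attach, true_and, Prod.mk.injEq]
    constructor
    · rintro ⟨x, rfl, rfl⟩
      exact hf x
    · intro hab
      have ha : a ∈ T := hT ▸ mem_image_of_mem Prod.fst hab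
      exact ⟨⟨a, ha⟩, rfl, (Prod.ext_iff.mp (hinj (hf ⟨a, ha⟩) hab rfl)).2⟩
  calc #𝓕 ≤ #(univ.image graph) := card_le_card h𝓕_sub
    _ ≤ #(univ : Finset (T → β)) := card_image_le
    _ = Fintype.card β ^ #T := by simp

theorem ncard_forests_prod_le {V κ β γ : Type*} [Fintype V] [Fintype κ] [Fintype β]
    [Nonempty β] [Unique γ] (ε : κ → Sym2 V) (hε : ∀ p, ¬ (ε p).IsDiag) :
    {F : Finset (κ × β) | IsForest (ε ∘ Prod.fst) F}.ncard ≤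
      Fintype.card β ^ (Fintype.card V - 1) *
        {F : Finset (κ × γ) | IsForest (ε ∘ Prod.fst) F}.ncard := by
  classical
  rw [Set.ncard_eq_toFinset_card', Set.ncard_eq_toFinset_card', Set.toFinset_ofPred,
    Set.toFinset_ofPred]
  set forget : Finset (κ × β) → Finset (κ × γ) := fun F => F.image fun e => (e.1, default)
  refine card_le_mul_card_image_of_maps_to (f := forget) ?_ _ ?_
  · intro F hF
    simp only [mem_filter, mem_univ, true_and] at hF ⊢
    exact hF.image _ fun _ => rfl
  · intro S hS
    simp only [mem_filter, mem_univ, true_and] at hS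
    have hS_card : #(S.image Prod.fst) ≤ Fintype.card V - 1 :=
      card_image_le.trans (hS.card_le fun e _ => hε e.1)
    refine (card_le_pow_of_injOn_fst (S.image Prod.fst) _ fun F hF => ?_).trans
      (Nat.pow_le_pow_right Fintype.card_pos hS_card)
    simp only [mem_filter, mem_univ, true_and] at hF
    obtain ⟨hF, rfl⟩ := hF
    refine ⟨fun e he f hf hef => (hF.injOn (fun e _ => hε e.1)) he hf (by simp [hef]), ?_⟩
    simp [forget, image_image, Function.comp_def]

theorem stmt14_general (n c : ℕ) (hc : 1 ≤ c) :
    numForests n c ≤ c ^ (n - 1) * numForests n 1 := by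
  have : Nonempty (Fin c) := Fin.pos_iff_nonempty.mp hc
  have h := ncard_forests_prod_le (β := Fin c) (γ := Fin 1)
    (Subtype.val : { p : Sym2 (Fin n) // ¬ p.IsDiag } → Sym2 (Fin n)) fun p => p.2
  rwa [Fintype.card_fin, Fintype.card_fin] at h

/-- Upper bound on the number of forests of the complete multigraph:
`a_{n,c} ≤ c^(n−1) · a_{n,1}`. -/
theorem stmt14 (n c : ℕ) (hn : 2 ≤ n) (hc : 1 ≤ c) :
    numForests n c ≤ c ^ (n - 1) * numForests n 1 :=
  stmt14_general n c hc
end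

section
/- Main cut-counting estimate for complete graphs: there exists a constant K > 0 such that for every integer n ≥ 2, ∑_{k=1}^{n−1} binomial(n−2, k−1) · k^{k−2} · (n−k)^{n−k−2} ≤ K · n^{n−3}, where the powers are taken in the reals (with integer exponents, so that k^{k−2} = 1/k when k = 1 and similarly for (n−k)^{n−k−2}). -/
/-!
Up to normalisation the sum counts spanning forests of `K_n` with two trees separating two fixed
vertices, i.e. spanning trees through a fixed edge, so it equals `2 n^(n-3)` exactly. Analytically,
this is Abel's identity `∑ C(n,k) (k+1)^(k-1) (y+n-k)^(n-k) = (y+n+1)^n`: both sides have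
derivative `n` times the same identity for `n - 1` at `y + 1`, and at `y = -(n+1)` the left side
is an `n`-th forward difference of `r ↦ r^(n-1)`, hence zero. Writing
`(j+1)^(j-1) = (1+j)^j - j (1+j)^(j-1)` turns the two-tree sum into two instances of it.
-/

open Finset

lemma alternating_sum_choose_mul_add_one_pow {R : Type*} [CommRing R] (n : ℕ) :
    ∑ k ∈ range (n + 2), (-1 : R) ^ (n + 1 - k) * (n + 1).choose k * ((k : R) + 1) ^ n = 0 := by
  have h := fwdDiff_iter_eq_sum_shift (h := (1 : R)) (fun r : R ↦ r ^ n) (n + 1) 1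
  rw [fwdDiff_iter_pow_eq_zero_of_lt n.lt_succ_self] at h
  simpa [zsmul_eq_mul, add_comm (1 : R), mul_assoc] using h.symm

/-- Abel's sum `∑ C(n,k) x (x+k)^(k-1) (y+n-k)^(n-k)` at `x = 1`; truncated subtraction makes
`(k+1)^(k-1)` the right value `1` also at `k = 0`. -/
noncomputable def abelSum (n : ℕ) (y : ℝ) : ℝ :=
  ∑ k ∈ range (n + 1), (n.choose k : ℝ) * ((k : ℝ) + 1) ^ (k - 1) * (y + (n - k : ℕ)) ^ (n - k)

lemma sum_choose_mul_sub_mul_pow_sub_one (n : ℕ) (y : ℝ) :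
    ∑ k ∈ range (n + 2), ((n + 1).choose k : ℝ) * ((k : ℝ) + 1) ^ (k - 1) *
      ((n + 1 - k : ℕ) * (y + (n + 1 - k : ℕ)) ^ (n + 1 - k - 1)) = (n + 1) * abelSum n (y + 1) := by
  rw [sum_range_succ, abelSum, mul_sum]
  simp only [Nat.sub_self, Nat.cast_zero, zero_mul, mul_zero, add_zero]
  refine sum_congr rfl fun k hk ↦ ?_
  have hk : k ≤ n := Nat.lt_succ_iff.mp (mem_range.mp hk)
  rw [show n + 1 - k = (n - k) + 1 by omega, Nat.add_sub_cancel]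
  have hchoose : ((n + 1).choose k : ℝ) * ((n - k + 1 : ℕ) : ℝ) = (n + 1) * n.choose k := by
    rw [← Nat.sub_add_comm hk]
    exact_mod_cast (Nat.choose_mul_succ_eq n k).symm.trans (mul_comm _ _)
  have hshift : y + ((n - k + 1 : ℕ) : ℝ) = y + 1 + ((n - k : ℕ) : ℝ) := by push_cast; ring
  rw [hshift]
  linear_combination ((k + 1 : ℝ) ^ (k - 1) * (y + 1 + ((n - k : ℕ) : ℝ)) ^ (n - k)) * hchoose

lemma hasDerivAt_abelSum (n : ℕ) (y : ℝ) :
    HasDerivAt (abelSum (n + 1)) ((n + 1) * abelSum n (y + 1)) y := by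
  refine (HasDerivAt.fun_sum (u := range (n + 2)) fun k _ ↦
    (((hasDerivAt_id' y).add_const ((n + 1 - k : ℕ) : ℝ)).fun_pow (n + 1 - k)).const_mul
      (((n + 1).choose k : ℝ) * ((k : ℝ) + 1) ^ (k - 1))).congr_deriv ?_
  simp only [mul_one, sum_choose_mul_sub_mul_pow_sub_one]

lemma abelSum_succ_neg_eq_zero (n : ℕ) : abelSum (n + 1) (-(n + 2)) = 0 := by
  rw [abelSum, ← alternating_sum_choose_mul_add_one_pow (R := ℝ) n]
  refine sum_congr rfl fun k hk ↦ ?_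
  have hk : k ≤ n + 1 := Nat.lt_succ_iff.mp (mem_range.mp hk)
  have hbase : -((n : ℝ) + 2) + ((n + 1 - k : ℕ) : ℝ) = -1 * ((k : ℝ) + 1) := by
    push_cast [hk]; ring
  have hpow : ((k : ℝ) + 1) ^ (k - 1) * ((k : ℝ) + 1) ^ (n + 1 - k) = ((k : ℝ) + 1) ^ n := by
    rcases k with _ | j
    · simp
    · rw [← pow_add]; congr 1; omega
  rw [hbase, mul_pow, ← hpow]
  ring

theorem abelSum_eq (n : ℕ) (y : ℝ) : abelSum n y = (y + n + 1) ^ n := by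
  induction n generalizing y with
  | zero => simp [abelSum]
  | succ n ih =>
    have hderiv : ∀ y, HasDerivAt (fun y ↦ abelSum (n + 1) y - (y + (n + 2)) ^ (n + 1)) 0 y := by
      intro y
      refine ((hasDerivAt_abelSum n y).fun_sub
        (((hasDerivAt_id' y).add_const ((n : ℝ) + 2)).fun_pow (n + 1))).congr_deriv ?_
      rw [ih]; push_cast; ring
    have hconst := is_const_of_deriv_eq_zero (fun y ↦ (hderiv y).differentiableAt)
      (fun y ↦ (hderiv y).deriv) y (-(n + 2))
    rw [abelSum_succ_neg_eq_zero] at hconst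
    push_cast at hconst ⊢
    linear_combination hconst

theorem sum_choose_mul_cayley_mul_cayley (n : ℕ) :
    ∑ k ∈ range (n + 2), ((n + 1).choose k : ℝ) * ((k : ℝ) + 1) ^ (k - 1) *
      (((n + 1 - k : ℕ) : ℝ) + 1) ^ (n + 1 - k - 1) = 2 * (n + 3) ^ n := by
  have hsplit (j : ℕ) : ((j : ℝ) + 1) ^ (j - 1) = (1 + j) ^ j - j * (1 + j) ^ (j - 1) := by
    rcases j with _ | j
    · simp
    · push_cast; rw [pow_succ]; ring
  calc _ = abelSum (n + 1) 1 - (n + 1) * abelSum n (1 + 1) := by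
        rw [← sum_choose_mul_sub_mul_pow_sub_one, abelSum, ← sum_sub_distrib]
        refine sum_congr rfl fun k _ ↦ ?_
        rw [hsplit (n + 1 - k), mul_sub]
    _ = 2 * (n + 3) ^ n := by
        rw [abelSum_eq, abelSum_eq]
        push_cast; ring

lemma natCast_add_one_zpow_sub_one (i : ℕ) :
    ((i + 1 : ℕ) : ℝ) ^ ((i : ℤ) - 1) = ((i : ℝ) + 1) ^ (i - 1) := by
  rcases i with _ | i
  · simp
  · rw [show ((i + 1 : ℕ) : ℤ) - 1 = (i : ℕ) by push_cast; ring, zpow_natCast]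
    push_cast; rfl

theorem sum_Icc_choose_mul_zpow_eq_two_mul_zpow (n : ℕ) (hn : 2 ≤ n) :
    ∑ k ∈ Finset.Icc 1 (n - 1),
        ((n - 2).choose (k - 1) : ℝ) * (k : ℝ) ^ ((k : ℤ) - 2) *
          ((n - k : ℕ) : ℝ) ^ ((n : ℤ) - (k : ℤ) - 2) =
      2 * (n : ℝ) ^ ((n : ℤ) - 3) := by
  obtain ⟨m, rfl⟩ | ⟨m, rfl⟩ : n = 2 ∨ ∃ m, n = m + 3 := by
    rcases Nat.exists_eq_add_of_le hn with ⟨m, rfl⟩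
    rcases m with _ | m
    · left; rfl
    · right; exact ⟨m, by omega⟩
  · norm_num
  have hrhs : ((m + 3 : ℕ) : ℝ) ^ (((m + 3 : ℕ) : ℤ) - 3) = ((m : ℝ) + 3) ^ m := by
    rw [show ((m + 3 : ℕ) : ℤ) - 3 = (m : ℕ) by push_cast; ring, zpow_natCast]
    push_cast; rfl
  rw [hrhs, ← Ico_add_one_right_eq_Icc, sum_Ico_eq_sum_range,
    ← sum_choose_mul_cayley_mul_cayley m]
  refine sum_congr rfl fun i hi ↦ ?_
  have hi : i ≤ m + 1 := Nat.lt_succ_iff.mp (mem_range.mp hi)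
  rw [show m + 3 - (1 + i) = (m + 1 - i) + 1 by omega,
    show ((1 + i : ℕ) : ℤ) - 2 = (i : ℤ) - 1 by push_cast; ring,
    show ((m + 3 : ℕ) : ℤ) - ((1 + i : ℕ) : ℤ) - 2 = ((m + 1 - i : ℕ) : ℤ) - 1 by
      push_cast [hi]; ring,
    add_comm 1 i, natCast_add_one_zpow_sub_one, natCast_add_one_zpow_sub_one,
    show m + 3 - 2 = m + 1 from rfl, Nat.add_sub_cancel]

/-- Main cut-counting estimate for complete graphs: there is a constant `K > 0` such that
for every `n ≥ 2`,
`∑_{k=1}^{n−1} C(n−2, k−1) · k^(k−2) · (n−k)^(n−k−2) ≤ K · n^(n−3)`,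
where the powers are real powers with integer exponents. -/
theorem stmt15 :
    ∃ K : ℝ, 0 < K ∧ ∀ n : ℕ, 2 ≤ n →
      ∑ k ∈ Finset.Icc 1 (n - 1),
          ((n - 2).choose (k - 1) : ℝ) * (k : ℝ) ^ ((k : ℤ) - 2) *
            (((n - k : ℕ) : ℝ)) ^ ((n : ℤ) - (k : ℤ) - 2) ≤
        K * (n : ℝ) ^ ((n : ℤ) - 3) :=
  ⟨2, two_pos, fun n hn ↦ (sum_Icc_choose_mul_zpow_eq_two_mul_zpow n hn).le⟩
end

section
/- Expected reciprocal degree bound for Erdős–Rényi credit networks: let n ≥ 1 and c ≥ 1 be integers and let p be a real number with 0 < p ≤ 1 and n·p ≥ 8·ln(c·n). Then ∑_{k=0}^{n} binomial(n, k) · p^k · (1−p)^{n−k} · (1/(c·k+1)) ≤ 1/(c·n) + 2/(n·p·c). -/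
/-- Expected reciprocal degree bound for Erdős–Rényi credit networks: if `X` is binomial
with parameters `n` and `p`, `0 < p ≤ 1`, and `n·p ≥ 8·ln(c·n)`, then
`E[1/(cX+1)] ≤ 1/(cn) + 2/(npc)`. -/
theorem stmt18 (n c : ℕ) (hn : 1 ≤ n) (hc : 1 ≤ c) (p : ℝ)
    (hp0 : 0 < p) (hp1 : p ≤ 1)
    (hnp : 8 * Real.log ((c : ℝ) * (n : ℝ)) ≤ (n : ℝ) * p) :
    ∑ k ∈ Finset.range (n + 1),
        (n.choose k : ℝ) * p ^ k * (1 - p) ^ (n - k) * (1 / ((c : ℝ) * (k : ℝ) + 1)) ≤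
      1 / ((c : ℝ) * (n : ℝ)) + 2 / ((n : ℝ) * p * (c : ℝ)) := by
  have hn1 : (1:ℝ) ≤ (n:ℝ) := by exact_mod_cast hn
  have hc1 : (1:ℝ) ≤ (c:ℝ) := by exact_mod_cast hc
  have hcn1 : (1:ℝ) ≤ (c:ℝ) * (n:ℝ) := by nlinarith
  have hcn0 : (0:ℝ) < (c:ℝ) * (n:ℝ) := by linarith
  have hq0 : (0:ℝ) ≤ 1 - p := by linarith
  rw [Finset.sum_range_succ']
  have h0 : (n.choose 0 : ℝ) * p ^ 0 * (1 - p) ^ (n - 0) * (1 / ((c : ℝ) * ((0:ℕ) : ℝ) + 1))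
      = (1 - p) ^ n := by simp
  have hbound0 : (1 - p) ^ n ≤ 1 / ((c:ℝ) * (n:ℝ)) := by
    have h1 : (1 - p) ^ n ≤ Real.exp (-p) ^ n := by
      apply pow_le_pow_left₀ hq0
      linarith [Real.add_one_le_exp (-p)]
    have h2 : Real.exp (-p) ^ n = Real.exp ((n:ℝ) * (-p)) := (Real.exp_nat_mul _ n).symm
    have hlog0 : 0 ≤ Real.log ((c:ℝ) * (n:ℝ)) := Real.log_nonneg hcn1
    have h3 : (n:ℝ) * (-p) ≤ -Real.log ((c:ℝ) * (n:ℝ)) := by nlinarith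
    calc (1 - p) ^ n ≤ Real.exp ((n:ℝ) * (-p)) := by rw [← h2]; exact h1
      _ ≤ Real.exp (-Real.log ((c:ℝ) * (n:ℝ))) := Real.exp_le_exp.mpr h3
      _ = 1 / ((c:ℝ) * (n:ℝ)) := by
          rw [Real.exp_neg, Real.exp_log hcn0, one_div]
  have key : ∀ k ∈ Finset.range n,
      (n.choose (k+1) : ℝ) * p ^ (k+1) * (1 - p) ^ (n - (k+1)) *
        (1 / ((c : ℝ) * ((k+1:ℕ) : ℝ) + 1)) ≤
      (2 / (((n:ℝ)+1) * p * (c:ℝ))) *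
        (p ^ (k+2) * (1 - p) ^ ((n+1) - (k+2)) * ((n+1).choose (k+2) : ℝ)) := by
    intro k hk
    have hk' : k < n := Finset.mem_range.mp hk
    have hA : ((n:ℝ)+1) * (n.choose (k+1) : ℝ) = ((n+1).choose (k+2) : ℝ) * ((k:ℝ)+2) := by
      have := Nat.add_one_mul_choose_eq n (k+1)
      have h := congrArg (fun m : ℕ => (m:ℝ)) this
      push_cast at h
      linarith
    have hexp : (n+1) - (k+2) = n - (k+1) := by omega
    rw [hexp]
    have hA0 : (0:ℝ) ≤ ((n+1).choose (k+2) : ℝ) := Nat.cast_nonneg _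
    have hP : (0:ℝ) ≤ p ^ (k+1) * (1 - p) ^ (n - (k+1)) := by positivity
    have hd1 : (0:ℝ) < (c:ℝ) * ((k+1:ℕ):ℝ) + 1 := by positivity
    have hd2 : (0:ℝ) < ((n:ℝ)+1) * p * (c:ℝ) := by positivity
    rw [mul_one_div, div_mul_eq_mul_div, div_le_div_iff₀ hd1 hd2]
    push_cast
    have hkey : ((k:ℝ)+2) * (c:ℝ) ≤ 2 * ((c:ℝ)*((k:ℝ)+1)+1) := by nlinarith [mul_nonneg (Nat.cast_nonneg k : (0:ℝ) ≤ (k:ℝ)) (by linarith : (0:ℝ) ≤ (c:ℝ))]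
    calc (n.choose (k+1) : ℝ) * p ^ (k+1) * (1 - p) ^ (n - (k+1)) * (((n:ℝ) + 1) * p * (c:ℝ))
        = (((n:ℝ)+1) * (n.choose (k+1):ℝ)) * (p ^ (k+1) * (1 - p) ^ (n - (k+1)) * p * (c:ℝ)) := by ring
      _ = (((n+1).choose (k+2):ℝ) * ((k:ℝ)+2)) * (p ^ (k+1) * (1 - p) ^ (n - (k+1)) * p * (c:ℝ)) := by rw [hA]
      _ = (((n+1).choose (k+2):ℝ) * (p ^ (k+1) * (1 - p) ^ (n - (k+1)) * p)) * (((k:ℝ)+2) * (c:ℝ)) := by ring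
      _ ≤ (((n+1).choose (k+2):ℝ) * (p ^ (k+1) * (1 - p) ^ (n - (k+1)) * p)) * (2 * ((c:ℝ)*((k:ℝ)+1)+1)) :=
          mul_le_mul_of_nonneg_left hkey (mul_nonneg hA0 (mul_nonneg hP hp0.le))
      _ = 2 * (p ^ (k+2) * (1 - p) ^ (n - (k+1)) * ((n+1).choose (k+2):ℝ)) * ((c:ℝ)*((k:ℝ)+1)+1) := by ring
  have hbin : ∑ j ∈ Finset.range (n+2), p ^ j * (1 - p) ^ ((n+1) - j) * ((n+1).choose j : ℝ) = 1 := by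
    have h := add_pow p (1-p) (n+1)
    rw [show p + (1-p) = 1 by ring, one_pow] at h
    exact h.symm
  have e1 := Finset.sum_range_succ' (fun j => p ^ j * (1 - p) ^ ((n+1) - j) * ((n+1).choose j : ℝ)) (n+1)
  have e2 := Finset.sum_range_succ' (fun j => p ^ (j+1) * (1 - p) ^ ((n+1) - (j+1)) * ((n+1).choose (j+1) : ℝ)) n
  have hshift : ∑ k ∈ Finset.range n, p ^ (k+1+1) * (1 - p) ^ ((n+1) - (k+1+1)) * ((n+1).choose (k+1+1) : ℝ)
      = ∑ k ∈ Finset.range n, p ^ (k+2) * (1 - p) ^ ((n+1) - (k+2)) * ((n+1).choose (k+2) : ℝ) := by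
    apply Finset.sum_congr rfl
    intro i _
    norm_num
  have hF0 : (0:ℝ) ≤ p ^ 0 * (1 - p) ^ ((n+1) - 0) * ((n+1).choose 0 : ℝ) := by positivity
  have hF1 : (0:ℝ) ≤ p ^ (0+1) * (1 - p) ^ ((n+1) - (0+1)) * ((n+1).choose (0+1) : ℝ) := by positivity
  have hsub : ∑ k ∈ Finset.range n, p ^ (k+2) * (1 - p) ^ ((n+1) - (k+2)) * ((n+1).choose (k+2) : ℝ) ≤ 1 := by
    simp only [e1, e2, hshift] at hbin
    linarith
  have hd2 : (0:ℝ) < ((n:ℝ)+1) * p * (c:ℝ) := by positivity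
  have hsum : ∑ k ∈ Finset.range n,
      (n.choose (k+1) : ℝ) * p ^ (k+1) * (1 - p) ^ (n - (k+1)) * (1 / ((c : ℝ) * ((k+1:ℕ) : ℝ) + 1))
      ≤ 2 / ((n:ℝ) * p * (c:ℝ)) := by
    calc ∑ k ∈ Finset.range n,
        (n.choose (k+1) : ℝ) * p ^ (k+1) * (1 - p) ^ (n - (k+1)) * (1 / ((c : ℝ) * ((k+1:ℕ) : ℝ) + 1))
        ≤ ∑ k ∈ Finset.range n, (2 / (((n:ℝ)+1) * p * (c:ℝ))) *
            (p ^ (k+2) * (1 - p) ^ ((n+1) - (k+2)) * ((n+1).choose (k+2) : ℝ)) :=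
          Finset.sum_le_sum key
      _ = (2 / (((n:ℝ)+1) * p * (c:ℝ))) *
            ∑ k ∈ Finset.range n, p ^ (k+2) * (1 - p) ^ ((n+1) - (k+2)) * ((n+1).choose (k+2) : ℝ) := by
          rw [Finset.mul_sum]
      _ ≤ (2 / (((n:ℝ)+1) * p * (c:ℝ))) * 1 :=
          mul_le_mul_of_nonneg_left hsub (by positivity)
      _ = 2 / (((n:ℝ)+1) * p * (c:ℝ)) := mul_one _
      _ ≤ 2 / ((n:ℝ) * p * (c:ℝ)) := by
          apply div_le_div_of_nonneg_left (by norm_num) (by positivity)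
          nlinarith
  rw [h0]
  linarith
end
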